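/- arXiv:2508.13849 — 6 statements merged into one kernel-verified Lean document; each statement's English description precedes it below -/
import Mathlib

section
/- There exists an absolute constant C > 0 such that for every integer n ≥ 1, every r ∈ (0,1], and all reals θ, θ' with e^{iθ} ≠ e^{iθ'}, one has | 2·Σ_{ℓ=1}^{n} (r^{2ℓ}/ℓ)·cos(ℓ(θ−θ')) + 2·log|e^{iθ} − e^{iθ'}| | ≤ C·( n^{-1} + (1−r²) )·‖θ−θ'‖^{-1}, where ‖x‖ denotes the distance from x to 2πℤ. -/
open Real Complex

/-- `‖x‖`: the distance from `x` to `2πℤ`. -/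
noncomputable def distToTwoPiZ (x : ℝ) : ℝ :=
  Metric.infDist x (Set.range fun m : ℤ => 2 * Real.pi * m)

/-!
Put `u = e^{i(θ-θ')}` and `s = r²`. The quantity to bound is twice
`Re (log (1 - su) + ∑_{ℓ ≤ n} (su)^ℓ / ℓ) + (log |1 - u| - log |1 - su|)`.
The first term is the tail of the series of `-log (1 - w)` at `w = su`: along the segment
`t ↦ t w` its derivative is `-w (tw)^n / (1 - tw)`, and `|1 - tw| ≥ |1 - w| / 2` there, so it is
`O(1 / ((n + 1) |1 - u|))` even on the unit circle. The second term is `O((1 - s) / |1 - u|)`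
since `log` is Lipschitz away from `0`. Finally the chord `|1 - u|` is at least `2/π` times the
arc `‖θ - θ'‖`.
-/

theorem distToTwoPiZ_eq_abs_toIocMod (x : ℝ) :
    distToTwoPiZ x = |toIocMod two_pi_pos (-π) x| := by
  set y := toIocMod two_pi_pos (-π) x
  set k := toIocDiv two_pi_pos (-π) x
  have hxy : x = y + 2 * π * k := by
    rw [← toIocMod_add_toIocDiv_zsmul two_pi_pos (-π) x, zsmul_eq_mul]; ring
  have hy : |y| ≤ π := by
    have hmem := toIocMod_mem_Ioc two_pi_pos (-π) x
    exact abs_le.2 ⟨hmem.1.le, by linarith [hmem.2]⟩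
  apply le_antisymm
  · calc distToTwoPiZ x ≤ dist x (2 * π * k) := Metric.infDist_le_dist_of_mem ⟨k, rfl⟩
      _ = |y| := by rw [Real.dist_eq, hxy, add_sub_cancel_right]
  · refine (Metric.le_infDist (Set.range_nonempty _)).2 ?_
    rintro _ ⟨m, rfl⟩
    rw [Real.dist_eq, hxy, add_sub_assoc, ← mul_sub]
    rcases eq_or_ne k m with rfl | hkm
    · simp
    have hkm : (1 : ℝ) ≤ |(k : ℝ) - m| := by
      exact_mod_cast Int.one_le_abs (sub_ne_zero.2 hkm)
    have htri := abs_sub_abs_le_abs_sub (2 * π * ((k : ℝ) - m)) (-y)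
    rw [abs_mul, abs_of_pos two_pi_pos, abs_neg, sub_neg_eq_add, add_comm] at htri
    nlinarith [pi_pos]

theorem norm_exp_mul_I_sub_mem_Icc_distToTwoPiZ (θ θ' : ℝ) :
    ‖exp (θ * I) - exp (θ' * I)‖ ∈
      Set.Icc (2 / π * distToTwoPiZ (θ - θ')) (distToTwoPiZ (θ - θ')) := by
  rw [distToTwoPiZ_eq_abs_toIocMod, ← angle_exp_exp]
  exact norm_sub_mem_Icc_angle (norm_exp_ofReal_mul_I θ) (norm_exp_ofReal_mul_I θ')

theorem norm_sub_le_two_mul_norm_sub_smul {E : Type*} [SeminormedAddCommGroup E]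
    [NormedSpace ℝ E] {a w : E} (hw : ‖w‖ ≤ ‖a‖) {t : ℝ} (ht₀ : 0 ≤ t) (ht₁ : t ≤ 1) :
    ‖a - w‖ ≤ 2 * ‖a - t • w‖ := by
  have h₁ : ‖a - w‖ ≤ ‖a - t • w‖ + (1 - t) * ‖w‖ := by
    calc ‖a - w‖ = ‖(a - t • w) - (1 - t) • w‖ := by rw [sub_smul, one_smul]; abel_nf
      _ ≤ ‖a - t • w‖ + ‖(1 - t) • w‖ := norm_sub_le _ _
      _ = ‖a - t • w‖ + (1 - t) * ‖w‖ := by rw [norm_smul, Real.norm_of_nonneg (by linarith)]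
  have h₂ : (1 - t) * ‖w‖ ≤ ‖a - t • w‖ := by
    calc (1 - t) * ‖w‖ ≤ ‖a‖ - ‖t • w‖ := by
          rw [norm_smul, Real.norm_of_nonneg ht₀]; linarith
      _ ≤ ‖a - t • w‖ := norm_sub_norm_le _ _
  linarith

theorem one_sub_mem_slitPlane_of_norm_le_one {w : ℂ} (hw : ‖w‖ ≤ 1) (hw₁ : w ≠ 1) :
    1 - w ∈ slitPlane := by
  rw [mem_slitPlane_iff, sub_re, one_re, sub_im, one_im, zero_sub, neg_ne_zero]
  by_cases him : w.im = 0
  · left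
    have hre : w.re ≠ 1 := fun h => hw₁ (Complex.ext (by simpa using h) (by simpa using him))
    exact sub_pos.2 (lt_of_le_of_ne ((re_le_norm w).trans hw) hre)
  · exact Or.inr him

theorem logTaylor_succ_neg (n : ℕ) (u : ℂ) :
    logTaylor (n + 1) (-u) = -∑ ℓ ∈ Finset.Icc 1 n, u ^ ℓ / ℓ := by
  rw [logTaylor, Finset.sum_range_succ', ← Finset.Ico_add_one_right_eq_Icc,
    Finset.sum_Ico_eq_sum_range, Nat.add_sub_cancel, ← Finset.sum_neg_distrib]
  simp only [Nat.cast_zero, div_zero, add_zero]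
  refine Finset.sum_congr rfl fun k _ => ?_
  have hsign : (-1 : ℂ) ^ (k + 1 + 1) * (-1) ^ (k + 1) = -1 := by
    rw [← pow_add]; exact Odd.neg_one_pow ⟨k + 1, by ring⟩
  rw [neg_pow u, ← mul_assoc, hsign, add_comm 1 k]
  ring

theorem hasDerivAt_log_one_sub_add_sum (n : ℕ) {u : ℂ} (hu : 1 - u ∈ slitPlane) :
    HasDerivAt (fun u : ℂ => Complex.log (1 - u) + ∑ ℓ ∈ Finset.Icc 1 n, u ^ ℓ / ℓ)
      (-(u ^ n / (1 - u))) u := by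
  have hfun : (fun u : ℂ => Complex.log (1 - u) + ∑ ℓ ∈ Finset.Icc 1 n, u ^ ℓ / ℓ) =
      (fun z => Complex.log (1 + z) - logTaylor (n + 1) z) ∘ Neg.neg := by
    funext v
    simp only [Function.comp, logTaylor_succ_neg, sub_neg_eq_add, ← sub_eq_add_neg]
  rw [hfun]
  refine ((hasDerivAt_log_sub_logTaylor n (z := -u) (by rwa [← sub_eq_add_neg])).comp u
    (hasDerivAt_neg u)).congr_deriv ?_
  rw [neg_neg, ← sub_eq_add_neg]
  ring

theorem norm_log_one_sub_add_sum_le (n : ℕ) {w : ℂ} (hw : ‖w‖ ≤ 1) (hw₁ : w ≠ 1) :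
    ‖Complex.log (1 - w) + ∑ ℓ ∈ Finset.Icc 1 n, w ^ ℓ / ℓ‖ ≤
      2 * ‖w‖ ^ (n + 1) / ((n + 1) * ‖1 - w‖) := by
  set ρ := ‖1 - w‖
  have hρ : 0 < ρ := norm_pos_iff.2 (sub_ne_zero.2 hw₁.symm)
  have hseg : ∀ t ∈ Set.Icc (0 : ℝ) 1, ρ ≤ 2 * ‖1 - t * w‖ := fun t ht => by
    simpa [Complex.real_smul] using
      norm_sub_le_two_mul_norm_sub_smul (a := (1 : ℂ)) (by simpa using hw) ht.1 ht.2
  have hderiv : ∀ t ∈ Set.Icc (0 : ℝ) 1,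
      HasDerivAt (fun t : ℝ => Complex.log (1 - t * w) + ∑ ℓ ∈ Finset.Icc 1 n, (t * w) ^ ℓ / ℓ)
        (-((t * w) ^ n / (1 - t * w)) * w) t := fun t ht => by
    have htw : ‖(t : ℂ) * w‖ ≤ 1 := by
      rw [norm_mul, Complex.norm_of_nonneg ht.1]; nlinarith [norm_nonneg w, ht.2]
    have htw₁ : (t : ℂ) * w ≠ 1 := fun h => by
      have := hseg t ht; rw [h, sub_self, norm_zero] at this; linarith
    have hline : HasDerivAt (fun t : ℝ => (t : ℂ) * w) w t := by
      simpa using (hasDerivAt_id t).ofReal_comp.mul_const w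
    exact (hasDerivAt_log_one_sub_add_sum n
      (one_sub_mem_slitPlane_of_norm_le_one htw htw₁)).comp t hline
  have hbound : ∀ t ∈ Set.Ico (0 : ℝ) 1,
      ‖-((t * w) ^ n / (1 - t * w)) * w‖ ≤ 2 * ‖w‖ ^ (n + 1) / ρ * t ^ n := fun t ht => by
    have hρt := hseg t (Set.Ico_subset_Icc_self ht)
    have ht₀ := ht.1
    rw [norm_mul, norm_neg, norm_div, norm_pow, norm_mul, Complex.norm_of_nonneg ht₀]
    calc (t * ‖w‖) ^ n / ‖1 - t * w‖ * ‖w‖ = t ^ n * ‖w‖ ^ (n + 1) / ‖1 - t * w‖ := by ring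
      _ ≤ t ^ n * ‖w‖ ^ (n + 1) / (ρ / 2) := by
        gcongr
        linarith
      _ = 2 * ‖w‖ ^ (n + 1) / ρ * t ^ n := by ring
  have key := image_norm_le_of_norm_deriv_right_le_deriv_boundary
    (f := fun t : ℝ => Complex.log (1 - t * w) + ∑ ℓ ∈ Finset.Icc 1 n, (t * w) ^ ℓ / ℓ)
    (B := fun t => 2 * ‖w‖ ^ (n + 1) / ρ * (t ^ (n + 1) / (n + 1)))
    (fun t ht => (hderiv t ht).continuousAt.continuousWithinAt)
    (fun t ht => (hderiv t (Set.Ico_subset_Icc_self ht)).hasDerivWithinAt)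
    ?_ (fun t => ?_) hbound (Set.right_mem_Icc.2 zero_le_one)
  · simp only [Complex.ofReal_one, one_mul, one_pow] at key
    convert key using 1
    field_simp
  · have hzero : ∑ ℓ ∈ Finset.Icc 1 n, (0 : ℂ) ^ ℓ / ℓ = 0 := Finset.sum_eq_zero fun ℓ hℓ => by
      rw [zero_pow (by have := (Finset.mem_Icc.1 hℓ).1; omega), zero_div]
    simp [hzero]
  · refine (((hasDerivAt_pow (n + 1) t).div_const _).const_mul _).congr_deriv ?_
    push_cast
    field_simp

theorem abs_log_sub_log_le {a b c : ℝ} (hc : 0 < c) (ha : c ≤ a) (hb : c ≤ b) :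
    |Real.log a - Real.log b| ≤ |a - b| / c := by
  wlog hba : b ≤ a generalizing a b
  · rw [abs_sub_comm, abs_sub_comm a]; exact this hb ha (le_of_not_ge hba)
  have hb₀ : 0 < b := hc.trans_le hb
  rw [abs_of_nonneg (sub_nonneg.2 (Real.log_le_log hb₀ hba)), abs_of_nonneg (sub_nonneg.2 hba),
    ← Real.log_div (by linarith) hb₀.ne']
  calc Real.log (a / b) ≤ a / b - 1 := Real.log_le_sub_one_of_pos (div_pos (by linarith) hb₀)
    _ = (a - b) / b := by field_simp
    _ ≤ (a - b) / c := div_le_div_of_nonneg_left (by linarith) hc hb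

theorem abs_re_sum_add_log_norm_one_sub_le (n : ℕ) {u : ℂ} (hu : ‖u‖ ≤ 1) (hu₁ : u ≠ 1)
    {s : ℝ} (hs₀ : 0 ≤ s) (hs₁ : s ≤ 1) :
    |(∑ ℓ ∈ Finset.Icc 1 n, ((s : ℂ) * u) ^ ℓ / ℓ).re + Real.log ‖1 - u‖| ≤
      4 * (((n : ℝ) + 1)⁻¹ + (1 - s)) / ‖1 - u‖ := by
  set w := (s : ℂ) * u
  set ρ := ‖1 - u‖
  have hρ : 0 < ρ := norm_pos_iff.2 (sub_ne_zero.2 hu₁.symm)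
  have hw : ‖w‖ ≤ 1 := by
    rw [norm_mul, Complex.norm_of_nonneg hs₀]; nlinarith [norm_nonneg u]
  have hρw : ρ ≤ 2 * ‖1 - w‖ := by
    simpa [Complex.real_smul] using
      norm_sub_le_two_mul_norm_sub_smul (a := (1 : ℂ)) (by simpa using hu) hs₀ hs₁
  have hw₁ : w ≠ 1 := fun h => by rw [h, sub_self, norm_zero] at hρw; linarith
  have htail : |(Complex.log (1 - w) + ∑ ℓ ∈ Finset.Icc 1 n, w ^ ℓ / ℓ).re| ≤
      4 * ((n : ℝ) + 1)⁻¹ / ρ :=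
    calc _ ≤ ‖Complex.log (1 - w) + ∑ ℓ ∈ Finset.Icc 1 n, w ^ ℓ / ℓ‖ := abs_re_le_norm _
      _ ≤ 2 * ‖w‖ ^ (n + 1) / ((n + 1) * ‖1 - w‖) := norm_log_one_sub_add_sum_le n hw hw₁
      _ ≤ 2 * 1 / ((n + 1) * (ρ / 2)) := by
        gcongr
        · exact pow_le_one₀ (norm_nonneg w) hw
        · linarith
      _ = 4 * ((n : ℝ) + 1)⁻¹ / ρ := by field_simp; ring
  have hradial : |Real.log ρ - Real.log ‖1 - w‖| ≤ 2 * (1 - s) / ρ :=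
    calc _ ≤ |ρ - ‖1 - w‖| / (ρ / 2) :=
          abs_log_sub_log_le (by positivity) (by linarith) (by linarith)
      _ ≤ (1 - s) / (ρ / 2) := by
        gcongr
        calc |ρ - ‖1 - w‖| ≤ ‖(1 - u) - (1 - w)‖ := abs_norm_sub_norm_le _ _
          _ = (1 - s) * ‖u‖ := by
            rw [sub_sub_sub_cancel_left, ← sub_one_mul, ← norm_neg, ← neg_mul, neg_sub,
              norm_mul, ← Complex.ofReal_one, ← Complex.ofReal_sub,
              Complex.norm_of_nonneg (by linarith)]
          _ ≤ 1 - s := mul_le_of_le_one_right (by linarith) hu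
      _ = 2 * (1 - s) / ρ := by field_simp
  have hsplit : (∑ ℓ ∈ Finset.Icc 1 n, w ^ ℓ / ℓ).re + Real.log ρ =
      (Complex.log (1 - w) + ∑ ℓ ∈ Finset.Icc 1 n, w ^ ℓ / ℓ).re +
        (Real.log ρ - Real.log ‖1 - w‖) := by
    rw [add_re, log_re]; ring
  rw [hsplit]
  calc _ ≤ 4 * ((n : ℝ) + 1)⁻¹ / ρ + 2 * (1 - s) / ρ :=
        (abs_add_le _ _).trans (add_le_add htail hradial)
    _ ≤ 4 * (((n : ℝ) + 1)⁻¹ + (1 - s)) / ρ := by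
      rw [mul_add, add_div]; gcongr; linarith

theorem re_ofReal_mul_exp_mul_I_pow_div (s x : ℝ) (ℓ : ℕ) :
    (((s : ℂ) * exp (x * I)) ^ ℓ / ℓ).re = s ^ ℓ / ℓ * Real.cos (ℓ * x) := by
  rw [div_natCast_re, mul_pow, ← Complex.exp_nat_mul, ← ofReal_pow, re_ofReal_mul,
    show (ℓ : ℂ) * (x * I) = ((ℓ * x : ℝ) : ℂ) * I by push_cast; ring, exp_ofReal_mul_I_re]
  ring

/-- Second covariance estimate: `C_n(r,θ,θ') = -2·log|e^{iθ} - e^{iθ'}|` up to an error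
`O((n⁻¹ + (1-r²))·‖θ-θ'‖⁻¹)`, uniformly. -/
theorem covariance_truncated_field_log_estimate :
    ∃ C : ℝ, 0 < C ∧ ∀ n : ℕ, 1 ≤ n → ∀ r : ℝ, 0 < r → r ≤ 1 → ∀ θ θ' : ℝ,
      Complex.exp (θ * Complex.I) ≠ Complex.exp (θ' * Complex.I) →
      |2 * ∑ ℓ ∈ Finset.Icc 1 n, r ^ (2 * ℓ) / ℓ * Real.cos (ℓ * (θ - θ')) +
          2 * Real.log ‖Complex.exp (θ * Complex.I) -
            Complex.exp (θ' * Complex.I)‖|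
        ≤ C * ((n : ℝ)⁻¹ + (1 - r ^ 2)) * (distToTwoPiZ (θ - θ'))⁻¹ := by
  refine ⟨4 * π, by positivity, fun n hn r hr₀ hr₁ θ θ' hne => ?_⟩
  set u := exp ((θ - θ' : ℝ) * I)
  have hrot : exp (θ * I) = exp (θ' * I) * u := by rw [← Complex.exp_add]; push_cast; ring_nf
  have hu₁ : u ≠ 1 := fun h => hne (by rw [hrot, h, mul_one])
  have hchord : ‖exp (θ * I) - exp (θ' * I)‖ = ‖1 - u‖ := by
    rw [hrot, ← mul_sub_one, norm_mul, norm_exp_ofReal_mul_I, one_mul, norm_sub_rev]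
  have hsum : ∑ ℓ ∈ Finset.Icc 1 n, r ^ (2 * ℓ) / ℓ * Real.cos (ℓ * (θ - θ')) =
      (∑ ℓ ∈ Finset.Icc 1 n, (((r ^ 2 : ℝ) : ℂ) * u) ^ ℓ / ℓ).re := by
    simp only [re_sum, u, re_ofReal_mul_exp_mul_I_pow_div, pow_mul]
  obtain ⟨hlow, hup⟩ := norm_exp_mul_I_sub_mem_Icc_distToTwoPiZ θ θ'
  rw [hchord] at hlow hup
  have hd : 0 < distToTwoPiZ (θ - θ') := (norm_pos_iff.2 (sub_ne_zero.2 hu₁.symm)).trans_le hup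
  have hr₂ : r ^ 2 ≤ 1 := pow_le_one₀ hr₀.le hr₁
  have hest := abs_re_sum_add_log_norm_one_sub_le n (norm_exp_ofReal_mul_I _).le hu₁
    (sq_nonneg r) hr₂
  have hn' : ((n : ℝ) + 1)⁻¹ ≤ (n : ℝ)⁻¹ := by
    have : (1 : ℝ) ≤ n := by exact_mod_cast hn
    exact inv_anti₀ (by linarith) (by linarith)
  rw [hsum, hchord, ← mul_add, abs_mul, abs_two]
  calc 2 * |_| ≤ 2 * (4 * (((n : ℝ) + 1)⁻¹ + (1 - r ^ 2)) / ‖1 - u‖) := by gcongr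
    _ ≤ 2 * (4 * ((n : ℝ)⁻¹ + (1 - r ^ 2)) / (2 / π * distToTwoPiZ (θ - θ'))) := by
      have : 0 ≤ (n : ℝ)⁻¹ := by positivity
      gcongr
    _ = _ := by field_simp
end

section
/- For all integers 1 ≤ n < n', every r ∈ (0,1], and every α ∈ ℝ, the tail sum T = Σ_{ℓ=n+1}^{n'} (r^{2ℓ}/ℓ)·cos(ℓα) satisfies: (i) if r < 1, then |T| ≤ 12π · n^{-1} · (1 − r²)^{-1}; and (ii) if ‖α‖ > 0, then |T| ≤ 12π · n^{-1} · ‖α‖^{-1}; where ‖α‖ denotes the distance from α to 2πℤ. -/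
/-!
Write the tail as `∑ ℓ⁻¹ aℓ` with `aℓ = tˡ cos(ℓα)`, `t = r²`. As `ℓ ↦ ℓ⁻¹` is decreasing, Abel
summation bounds it by `(n + 1)⁻¹` times any bound on the partial sums `∑_{n < ℓ ≤ k} aℓ`. These are
at most `(1 - t)⁻¹` by comparison with the full geometric series; they are also real parts of
geometric sums of `z = t e^{iα}`, hence at most `2 / ‖z - 1‖`, and
`‖z - 1‖ ≥ ‖e^{iα} - 1‖ / 2 = |sin (α / 2)| ≥ ‖α‖ / π` by Jordan's inequality.
-/

open Real

open Finset Complex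

theorem abs_sum_Icc_mul_le_of_antitoneOn (a c : ℕ → ℝ) {m : ℕ} {B : ℝ}
    (hc : AntitoneOn c (Set.Ici m)) (hc0 : ∀ k, m ≤ k → 0 ≤ c k)
    (hS : ∀ k, |∑ ℓ ∈ Icc m k, a ℓ| ≤ B) (N : ℕ) :
    |∑ ℓ ∈ Icc m N, c ℓ * a ℓ| ≤ c m * B := by
  rcases lt_or_ge N m with hNm | hmN
  · rw [Icc_eq_empty_of_lt hNm, sum_empty, abs_zero]
    exact mul_nonneg (hc0 m le_rfl) ((abs_nonneg _).trans (hS m))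
  -- Abel summation: with `S k = ∑_{m ≤ ℓ ≤ k} a ℓ`, the sum minus `c N * S N` equals
  -- `∑_{m ≤ k < N} (c k - c (k + 1)) * S k`, and the coefficients are nonnegative.
  have abel : ∀ N, m ≤ N →
      |∑ ℓ ∈ Icc m N, c ℓ * a ℓ - c N * ∑ ℓ ∈ Icc m N, a ℓ| ≤ (c m - c N) * B := by
    intro N hN
    induction N, hN using Nat.le_induction with
    | base => simp
    | succ N hN ih =>
      have hstep : c (N + 1) ≤ c N := hc (Set.mem_Ici.2 hN) (Set.mem_Ici.2 (by omega)) (by omega)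
      rw [sum_Icc_succ_top (by omega), sum_Icc_succ_top (by omega)]
      calc _ = |(∑ ℓ ∈ Icc m N, c ℓ * a ℓ - c N * ∑ ℓ ∈ Icc m N, a ℓ)
              + (c N - c (N + 1)) * ∑ ℓ ∈ Icc m N, a ℓ| := by ring_nf
        _ ≤ (c m - c N) * B + (c N - c (N + 1)) * B := by
          grw [abs_add_le, ih, abs_mul, abs_of_nonneg (sub_nonneg.2 hstep), hS N]
          exact sub_nonneg.2 hstep
        _ = (c m - c (N + 1)) * B := by ring
  calc |∑ ℓ ∈ Icc m N, c ℓ * a ℓ|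
      ≤ |c N * ∑ ℓ ∈ Icc m N, a ℓ| + |∑ ℓ ∈ Icc m N, c ℓ * a ℓ - c N * ∑ ℓ ∈ Icc m N, a ℓ| :=
        norm_le_norm_add_norm_sub' (E := ℝ) _ _
    _ ≤ c N * B + (c m - c N) * B := by
      grw [abel N hmN, abs_mul, abs_of_nonneg (hc0 N hmN), hS N]
      exact hc0 N hmN
    _ = c m * B := by ring

theorem abs_sum_pow_mul_cos_le {t : ℝ} (ht0 : 0 ≤ t) (ht1 : t < 1) (α : ℝ) (s : Finset ℕ) :
    |∑ ℓ ∈ s, t ^ ℓ * Real.cos (ℓ * α)| ≤ (1 - t)⁻¹ := by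
  calc |∑ ℓ ∈ s, t ^ ℓ * Real.cos (ℓ * α)|
      ≤ ∑ ℓ ∈ s, t ^ ℓ := by
        grw [abs_sum_le_sum_abs]
        gcongr with ℓ
        rw [abs_mul, abs_of_nonneg (by positivity)]
        exact mul_le_of_le_one_right (by positivity) (Real.abs_cos_le_one _)
    _ ≤ ∑' ℓ, t ^ ℓ :=
        (summable_geometric_of_lt_one ht0 ht1).sum_le_tsum s fun ℓ _ => by positivity
    _ = (1 - t)⁻¹ := tsum_geometric_of_lt_one ht0 ht1

theorem norm_sum_Icc_pow_le {z : ℂ} (hz : ‖z‖ ≤ 1) (hz1 : z ≠ 1) (m k : ℕ) :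
    ‖∑ ℓ ∈ Icc m k, z ^ ℓ‖ ≤ 2 / ‖z - 1‖ := by
  rcases lt_or_ge k m with hkm | hmk
  · rw [Icc_eq_empty_of_lt hkm, sum_empty, norm_zero]
    positivity
  rw [← Ico_add_one_right_eq_Icc, geom_sum_Ico hz1 (by omega), norm_div]
  gcongr
  calc ‖z ^ (k + 1) - z ^ m‖ ≤ ‖z‖ ^ (k + 1) + ‖z‖ ^ m := by
        grw [norm_sub_le, norm_pow, norm_pow]
    _ ≤ 2 := by grw [pow_le_one₀ (norm_nonneg z) hz, pow_le_one₀ (norm_nonneg z) hz]; norm_num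

theorem re_ofReal_mul_exp_I_mul_pow (t α : ℝ) (ℓ : ℕ) :
    (((t : ℂ) * exp (I * α)) ^ ℓ).re = t ^ ℓ * Real.cos (ℓ * α) := by
  rw [mul_pow, ← Complex.exp_nat_mul, ← ofReal_pow,
    show (ℓ : ℂ) * (I * α) = ((ℓ * α : ℝ) : ℂ) * I by push_cast; ring,
    re_ofReal_mul, exp_ofReal_mul_I_re]

theorem norm_exp_I_mul_sub_one_le_two_mul_norm_ofReal_mul_sub_one {t : ℝ} (ht0 : 0 ≤ t) (α : ℝ) :
    ‖exp (I * α) - 1‖ ≤ 2 * ‖(t : ℂ) * exp (I * α) - 1‖ := by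
  have hcos := Real.neg_one_le_cos α
  have hcos' := Real.cos_le_one α
  rw [← sq_le_sq₀ (norm_nonneg _) (by positivity), mul_pow, Complex.sq_norm, Complex.sq_norm,
    normSq_apply, normSq_apply]
  simp only [mul_comm I, sub_re, sub_im, one_re, one_im, exp_ofReal_mul_I_re, exp_ofReal_mul_I_im,
    re_ofReal_mul, im_ofReal_mul]
  have hsin := Real.sin_sq_add_cos_sq α
  -- The goal is `0 ≤ 4t² - 8t cos α + 2 + 2 cos α`: complete the square in `t` if
  -- `cos α ≥ -1/2`, otherwise every term is nonnegative.
  rcases le_or_gt (-1 / 2) (Real.cos α) with hc | hc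
  · nlinarith [sq_nonneg (t - Real.cos α), mul_nonneg (by linarith : 0 ≤ 2 * Real.cos α + 1)
      (sub_nonneg.2 hcos')]
  · nlinarith [mul_nonneg ht0 (by linarith : 0 ≤ -Real.cos α), sq_nonneg t]

theorem exists_abs_sub_two_pi_mul_le_pi (α : ℝ) : ∃ m : ℤ, |α - 2 * π * m| ≤ π := by
  refine ⟨round (α / (2 * π)), ?_⟩
  have h := abs_sub_round (α / (2 * π))
  rw [show α - 2 * π * round (α / (2 * π)) = (α / (2 * π) - round (α / (2 * π))) * (2 * π) by
    field_simp, abs_mul, abs_of_pos (by positivity : (0:ℝ) < 2 * π)]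
  nlinarith [pi_pos]

theorem distToTwoPiZ_le_abs_sub (α : ℝ) (m : ℤ) : distToTwoPiZ α ≤ |α - 2 * π * m| :=
  (Metric.infDist_le_dist_of_mem (Set.mem_range_self m)).trans_eq (Real.dist_eq _ _)

theorem distToTwoPiZ_le_pi_div_two_mul_norm_exp_I_mul_sub_one (α : ℝ) :
    distToTwoPiZ α ≤ π / 2 * ‖exp (I * α) - 1‖ := by
  obtain ⟨m, hm⟩ := exists_abs_sub_two_pi_mul_le_pi α
  set β := α - 2 * π * m
  have hexp : exp (I * α) = exp (I * β) := by
    rw [show I * (β : ℂ) = I * α - m * (2 * π * I) by push_cast [β]; ring,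
      Complex.exp_sub, Complex.exp_int_mul_two_pi_mul_I, div_one]
  have hjordan : 2 / π * (|β| / 2) ≤ Real.sin (|β| / 2) :=
    Real.mul_le_sin (by positivity) (by linarith)
  have hsin : |Real.sin (β / 2)| = Real.sin (|β| / 2) := by
    rw [Real.abs_sin_eq_sin_abs_of_abs_le_pi (by rw [abs_div, abs_two]; linarith [pi_pos]),
      abs_div, abs_two]
  calc distToTwoPiZ α ≤ |β| := distToTwoPiZ_le_abs_sub α m
    _ = π / 2 * (2 * (2 / π * (|β| / 2))) := by field_simp
    _ ≤ π / 2 * ‖exp (I * α) - 1‖ := by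
      rw [hexp, norm_exp_I_mul_ofReal_sub_one, norm_mul, Real.norm_eq_abs, Real.norm_eq_abs, hsin]
      grw [hjordan, abs_two]

theorem abs_sum_Icc_pow_mul_cos_le_of_distToTwoPiZ_pos {t : ℝ} (ht0 : 0 ≤ t) (ht1 : t ≤ 1)
    {α : ℝ} (hα : 0 < distToTwoPiZ α) (m k : ℕ) :
    |∑ ℓ ∈ Icc m k, t ^ ℓ * Real.cos (ℓ * α)| ≤ 2 * π / distToTwoPiZ α := by
  set z : ℂ := t * exp (I * α)
  have hdist : distToTwoPiZ α / π ≤ ‖z - 1‖ := by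
    rw [div_le_iff₀' pi_pos]
    grw [distToTwoPiZ_le_pi_div_two_mul_norm_exp_I_mul_sub_one,
      norm_exp_I_mul_sub_one_le_two_mul_norm_ofReal_mul_sub_one ht0]
    exact le_of_eq (by ring)
  have hz_pos : 0 < ‖z - 1‖ := (div_pos hα pi_pos).trans_le hdist
  have hz : ‖z‖ ≤ 1 := by
    rwa [norm_mul, norm_exp_I_mul_ofReal, mul_one, norm_real, Real.norm_of_nonneg ht0]
  calc |∑ ℓ ∈ Icc m k, t ^ ℓ * Real.cos (ℓ * α)|
      = |(∑ ℓ ∈ Icc m k, z ^ ℓ).re| := by simp only [re_sum, z, re_ofReal_mul_exp_I_mul_pow]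
    _ ≤ 2 / ‖z - 1‖ :=
      (abs_re_le_norm _).trans (norm_sum_Icc_pow_le hz (sub_ne_zero.1 (norm_pos_iff.1 hz_pos)) m k)
    _ ≤ 2 / (distToTwoPiZ α / π) := by gcongr
    _ = 2 * π / distToTwoPiZ α := by rw [div_div_eq_mul_div]

theorem abs_tail_sum_le_general (n n' : ℕ) (hn : 1 ≤ n)
    (r : ℝ) (hr0 : 0 < r) (hr1 : r ≤ 1) (α : ℝ) :
    (r < 1 →
      |∑ ℓ ∈ Finset.Icc (n + 1) n', r ^ (2 * ℓ) / ℓ * Real.cos (ℓ * α)| ≤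
        12 * Real.pi * (n : ℝ)⁻¹ * (1 - r ^ 2)⁻¹) ∧
    (0 < distToTwoPiZ α →
      |∑ ℓ ∈ Finset.Icc (n + 1) n', r ^ (2 * ℓ) / ℓ * Real.cos (ℓ * α)| ≤
        12 * Real.pi * (n : ℝ)⁻¹ * (distToTwoPiZ α)⁻¹) := by
  have hsum : ∑ ℓ ∈ Icc (n + 1) n', r ^ (2 * ℓ) / ℓ * Real.cos (ℓ * α) =
      ∑ ℓ ∈ Icc (n + 1) n', (ℓ : ℝ)⁻¹ * ((r ^ 2) ^ ℓ * Real.cos (ℓ * α)) :=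
    sum_congr rfl fun ℓ _ => by rw [pow_mul]; ring
  have hn0 : (0 : ℝ) < n := by exact_mod_cast hn
  have hinv : AntitoneOn (fun ℓ : ℕ => (ℓ : ℝ)⁻¹) (Set.Ici (n + 1)) := fun i hi j _ hij =>
    inv_anti₀ (Nat.cast_pos.2 (Nat.lt_of_lt_of_le n.succ_pos hi)) (Nat.cast_le.2 hij)
  have abel : ∀ B, (∀ k, |∑ ℓ ∈ Icc (n + 1) k, (r ^ 2) ^ ℓ * Real.cos (ℓ * α)| ≤ B) →
      |∑ ℓ ∈ Icc (n + 1) n', r ^ (2 * ℓ) / ℓ * Real.cos (ℓ * α)| ≤ (n : ℝ)⁻¹ * B := by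
    intro B hB
    have hB0 : 0 ≤ B := (abs_nonneg _).trans (hB 0)
    rw [hsum]
    grw [abs_sum_Icc_mul_le_of_antitoneOn _ _ hinv (fun k _ => by positivity) hB]
    gcongr
    omega
  constructor
  · intro hr
    have hr2 : r ^ 2 < 1 := pow_lt_one₀ hr0.le hr two_ne_zero
    have h12 : 1 ≤ 12 * π := by linarith [pi_gt_three]
    grw [abel _ fun k => abs_sum_pow_mul_cos_le (by positivity) hr2 α _, mul_assoc]
    exact le_mul_of_one_le_left (mul_nonneg (by positivity) (inv_nonneg.2 (by linarith))) h12
  · intro hα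
    have hr2 : r ^ 2 ≤ 1 := pow_le_one₀ hr0.le hr1
    grw [abel _ (abs_sum_Icc_pow_mul_cos_le_of_distToTwoPiZ_pos (by positivity) hr2 hα _)]
    rw [show (n : ℝ)⁻¹ * (2 * π / distToTwoPiZ α) = 2 * π * ((n : ℝ)⁻¹ * (distToTwoPiZ α)⁻¹) by
      ring, mul_assoc (12 * π)]
    gcongr
    linarith [pi_pos]

/-- Tail estimate for the covariance sums: for `1 ≤ n < n'`, `r ∈ (0,1]` and `α ∈ ℝ`,
the tail `T = Σ_{ℓ=n+1}^{n'} (r^{2ℓ}/ℓ)·cos(ℓα)` satisfies `|T| ≤ 12π·n⁻¹·(1-r²)⁻¹`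
when `r < 1`, and `|T| ≤ 12π·n⁻¹·‖α‖⁻¹` when `‖α‖ > 0`. -/
theorem abs_tail_sum_le (n n' : ℕ) (hn : 1 ≤ n) (hnn' : n < n')
    (r : ℝ) (hr0 : 0 < r) (hr1 : r ≤ 1) (α : ℝ) :
    (r < 1 →
      |∑ ℓ ∈ Finset.Icc (n + 1) n', r ^ (2 * ℓ) / ℓ * Real.cos (ℓ * α)| ≤
        12 * Real.pi * (n : ℝ)⁻¹ * (1 - r ^ 2)⁻¹) ∧
    (0 < distToTwoPiZ α →
      |∑ ℓ ∈ Finset.Icc (n + 1) n', r ^ (2 * ℓ) / ℓ * Real.cos (ℓ * α)| ≤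
        12 * Real.pi * (n : ℝ)⁻¹ * (distToTwoPiZ α)⁻¹) :=
  abs_tail_sum_le_general n n' hn r hr0 hr1 α
end

section
/- For all integers m ≥ 1 and q ≥ 1, the number of permutations σ of the set {1, …, m} all of whose cycles have length strictly greater than q is at most m!/(q+1). -/
/-!
Fix a point `x₀`. A permutation all of whose cycles are longer than `q` is determined by the
cycle through `x₀`, of some length `k + 1 > q`, together with its restriction to the complement
of that cycle, which again has all cycles longer than `q`. The cycle is given by the `k` distinct
points `σ x₀, …, σᵏ x₀ ≠ x₀`, so writing `g n` for the number of such permutations of `n` points,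
`g (n + 1) ≤ ∑_{q ≤ k ≤ n} n!/(n - k)! · g (n - k)`.
By induction `(q + 1) · g j ≤ j!` for `j ≥ 1`: each term with `k < n` is then at most
`n!/(q + 1)`, and the term `k = n` is `n!`, which adds up to `(n + 1)!/(q + 1)`.
-/

open Function Finset Nat

theorem Function.Semiconj.minimalPeriod_eq {α β : Type*} {f : α → α} {g : β → β} {j : α → β}
    (h : Semiconj j f g) (hj : Injective j) (x : α) :
    minimalPeriod g (j x) = minimalPeriod f x :=
  minimalPeriod_eq_minimalPeriod_iff.2 fun n => by
    simp only [IsPeriodicPt, IsFixedPt, ← (h.iterate_right n).eq x, hj.eq_iff]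

theorem Nat.card_le_mul_card_of_card_fiber_le {A B : Type*} [Finite A] [Finite B] (F : A → B)
    {c : ℕ} (h : ∀ b, Nat.card {a // F a = b} ≤ c) : Nat.card A ≤ c * Nat.card B := by
  cases nonempty_fintype B
  rw [← Nat.card_congr (Equiv.sigmaFiberEquiv F), Nat.card_sigma, Nat.card_eq_fintype_card,
    mul_comm, ← smul_eq_mul, ← Finset.card_univ]
  exact Finset.sum_le_card_nsmul _ _ _ fun b _ => h b

namespace Equiv.Perm

variable {α β : Type*}

def AllCyclesLongerThan (q : ℕ) (σ : Perm α) : Prop :=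
  ∀ x, q < minimalPeriod σ x

theorem allCyclesLongerThan_permCongr_iff {q : ℕ} (e : α ≃ β) {σ : Perm α} :
    AllCyclesLongerThan q (e.permCongr σ) ↔ AllCyclesLongerThan q σ := by
  have : Semiconj e σ (e.permCongr σ) := fun x => by simp
  exact (e.forall_congr fun x => by rw [this.minimalPeriod_eq e.injective]).symm

theorem AllCyclesLongerThan.subtypePerm {q : ℕ} {σ : Perm α} (hσ : AllCyclesLongerThan q σ)
    {p : α → Prop} (h : ∀ x, p (σ x) ↔ p x) : AllCyclesLongerThan q (σ.subtypePerm h) := fun y => by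
  rw [← (show Semiconj Subtype.val (σ.subtypePerm h) σ from fun _ => rfl).minimalPeriod_eq
    Subtype.val_injective]
  exact hσ y

noncomputable def longCyclePermCount (q n : ℕ) : ℕ :=
  Nat.card {σ : Perm (Fin n) // AllCyclesLongerThan q σ}

theorem card_allCyclesLongerThan [Finite α] (q : ℕ) :
    Nat.card {σ : Perm α // AllCyclesLongerThan q σ} = longCyclePermCount q (Nat.card α) :=
  Nat.card_congr <| (Finite.equivFin α).permCongr.subtypeEquiv fun _ =>
    (allCyclesLongerThan_permCongr_iff _).symm

theorem longCyclePermCount_zero (q : ℕ) : longCyclePermCount q 0 = 1 := by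
  rw [longCyclePermCount, Nat.card_eq_one_iff_exists]
  exact ⟨⟨1, fun x => x.elim0⟩, fun σ => Subtype.ext (Subsingleton.elim _ _)⟩

section CycleTail

variable {σ τ : Perm α} {x₀ : α} {k : ℕ}

def cycleTail (σ : Perm α) (x₀ : α) (h : minimalPeriod σ x₀ = k + 1) :
    Fin k ↪ {y // y ≠ x₀} where
  toFun j := ⟨σ^[j + 1] x₀, fun hj => by
    have := (iterate_eq_iterate_iff_of_lt_minimalPeriod (m := j + 1) (n := 0)
      (by omega) (by omega)).1 hj
    omega⟩
  inj' i j hij := Fin.ext <| by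
    have := (iterate_eq_iterate_iff_of_lt_minimalPeriod (by omega) (by omega)).1
      (congrArg Subtype.val hij)
    omega

def cycleSupport (f : Fin k ↪ {y // y ≠ x₀}) : Finset α :=
  cons x₀ (univ.map (f.trans (Embedding.subtype _))) (by simpa using fun j => (f j).2)

theorem card_cycleSupport (f : Fin k ↪ {y // y ≠ x₀}) : #(cycleSupport f) = k + 1 := by
  simp [cycleSupport]

theorem iterate_eq_iterate_of_cycleTail_eq (hσ : minimalPeriod σ x₀ = k + 1)
    (hτ : minimalPeriod τ x₀ = k + 1) (h : cycleTail σ x₀ hσ = cycleTail τ x₀ hτ) (i : ℕ) :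
    σ^[i] x₀ = τ^[i] x₀ := by
  rw [← iterate_mod_minimalPeriod_eq, ← iterate_mod_minimalPeriod_eq (f := τ), hσ, hτ]
  have hlt := Nat.mod_lt i k.succ_pos
  generalize i % (k + 1) = j at hlt
  cases j with
  | zero => rfl
  | succ j => exact congrArg Subtype.val (DFunLike.congr_fun h ⟨j, by omega⟩)

theorem mem_cycleSupport_cycleTail [Finite α] (h : minimalPeriod σ x₀ = k + 1) {y : α} :
    y ∈ cycleSupport (cycleTail σ x₀ h) ↔ σ.SameCycle x₀ y := by
  constructor
  · simp only [cycleSupport, mem_cons, mem_map, mem_univ, true_and]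
    rintro (rfl | ⟨j, rfl⟩)
    · exact SameCycle.refl _ _
    · exact ⟨((j + 1 : ℕ) : ℤ), by rw [zpow_natCast, coe_pow]; rfl⟩
  · intro hy
    obtain ⟨i, rfl⟩ := hy.exists_nat_pow_eq
    rw [coe_pow, ← iterate_mod_minimalPeriod_eq, h]
    have hlt := Nat.mod_lt i k.succ_pos
    generalize i % (k + 1) = j at hlt
    cases j with
    | zero => exact mem_cons_self _ _
    | succ j => exact mem_cons_of_mem (mem_map.2 ⟨⟨j, by omega⟩, mem_univ _, rfl⟩)

theorem eq_of_cycleTail_eq [Finite α] (hσ : minimalPeriod σ x₀ = k + 1)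
    (hτ : minimalPeriod τ x₀ = k + 1) (h : cycleTail σ x₀ hσ = cycleTail τ x₀ hτ)
    (hS : ∀ y ∉ cycleSupport (cycleTail σ x₀ hσ), σ y = τ y) : σ = τ := by
  ext y
  by_cases hy : y ∈ cycleSupport (cycleTail σ x₀ hσ)
  · obtain ⟨i, rfl⟩ := ((mem_cycleSupport_cycleTail hσ).1 hy).exists_nat_pow_eq
    rw [coe_pow, ← iterate_succ_apply' σ, iterate_eq_iterate_of_cycleTail_eq hσ hτ h,
      iterate_succ_apply', iterate_eq_iterate_of_cycleTail_eq hσ hτ h]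
  · exact hS y hy

theorem card_fiber_cycleTail_le [Finite α] (q : ℕ) (f : Fin k ↪ {y // y ≠ x₀}) :
    Nat.card {σ : Perm α // ∃ h : AllCyclesLongerThan q σ ∧ minimalPeriod σ x₀ = k + 1,
      cycleTail σ x₀ h.2 = f} ≤ longCyclePermCount q (Nat.card α - (k + 1)) := by
  let Fiber := {σ : Perm α // ∃ h : AllCyclesLongerThan q σ ∧ minimalPeriod σ x₀ = k + 1,
    cycleTail σ x₀ h.2 = f}
  have hS (σ : Fiber) (y : α) : σ.1 y ∉ cycleSupport f ↔ y ∉ cycleSupport f := by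
    obtain ⟨σ, h, rfl⟩ := σ
    simp only [mem_cycleSupport_cycleTail, sameCycle_apply_right]
  let restrict (σ : Fiber) : {τ : Perm {y // y ∉ cycleSupport f} // AllCyclesLongerThan q τ} :=
    ⟨σ.1.subtypePerm (hS σ), σ.2.1.1.subtypePerm _⟩
  have h_inj : Injective restrict := by
    rintro ⟨σ, hσ, rfl⟩ ⟨τ, hτ, hστ⟩ heq
    refine Subtype.ext (eq_of_cycleTail_eq hσ.2 hτ.2 hστ.symm fun y hy => ?_)
    exact congrArg Subtype.val (DFunLike.congr_fun (congrArg Subtype.val heq) ⟨y, hy⟩)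
  calc _ ≤ _ := Nat.card_le_card_of_injective restrict h_inj
    _ = _ := by
      classical
      cases nonempty_fintype α
      rw [card_allCyclesLongerThan, Nat.card_eq_fintype_card, Nat.card_eq_fintype_card,
        Fintype.card_subtype_compl, Fintype.card_coe, card_cycleSupport]

end CycleTail

theorem card_allCyclesLongerThan_eq_sum [Finite α] (q : ℕ) (x₀ : α) :
    Nat.card {σ : Perm α // AllCyclesLongerThan q σ} =
      ∑ k ∈ Ico q (Nat.card α),
        Nat.card {σ : Perm α // AllCyclesLongerThan q σ ∧ minimalPeriod σ x₀ = k + 1} := by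
  classical
  cases nonempty_fintype α
  simp only [Nat.card_eq_fintype_card, Fintype.card_subtype]
  refine (card_eq_sum_card_fiberwise (f := fun σ : Perm α => minimalPeriod σ x₀ - 1)
    (t := Ico q (Fintype.card α)) fun σ hσ => ?_).trans (sum_congr rfl fun k _ => ?_)
  · have h₁ := (mem_filter.1 hσ).2 x₀
    have h₂ : minimalPeriod σ x₀ ≤ Fintype.card α := minimalPeriod_le_card
    simp only [mem_coe, mem_Ico]
    omega
  · rw [filter_filter]
    refine congrArg card (filter_congr fun σ _ => and_congr_right fun hσ => ?_)
    have := hσ x₀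
    omega

theorem card_allCyclesLongerThan_minimalPeriod_eq_le [Finite α] (q : ℕ) (x₀ : α) (k : ℕ) :
    Nat.card {σ : Perm α // AllCyclesLongerThan q σ ∧ minimalPeriod σ x₀ = k + 1} ≤
      (Nat.card α - 1).descFactorial k * longCyclePermCount q (Nat.card α - (k + 1)) := by
  classical
  cases nonempty_fintype α
  calc _ ≤ longCyclePermCount q (Nat.card α - (k + 1)) * Nat.card (Fin k ↪ {y // y ≠ x₀}) :=
        Nat.card_le_mul_card_of_card_fiber_le (fun σ => cycleTail σ.1 x₀ σ.2.2) fun f =>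
          (Nat.card_congr (Equiv.subtypeSubtypeEquivSubtypeExists _ _)).trans_le
            (card_fiber_cycleTail_le q f)
    _ = _ := by
      rw [mul_comm, Nat.card_eq_fintype_card, Fintype.card_embedding_eq, Fintype.card_fin,
        Nat.card_eq_fintype_card, Fintype.card_subtype_compl, Fintype.card_subtype_eq]

theorem longCyclePermCount_succ_le (q n : ℕ) :
    longCyclePermCount q (n + 1) ≤
      ∑ k ∈ Ico q (n + 1), n.descFactorial k * longCyclePermCount q (n - k) := by
  rw [longCyclePermCount, card_allCyclesLongerThan_eq_sum q 0, Nat.card_fin]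
  exact sum_le_sum fun k _ => by
    simpa using card_allCyclesLongerThan_minimalPeriod_eq_le q (0 : Fin (n + 1)) k

theorem succ_mul_longCyclePermCount_le (q n : ℕ) :
    (q + 1) * longCyclePermCount q (n + 1) ≤ (n + 1)! := by
  induction n using Nat.strong_induction_on with
  | _ n ih =>
  have h_term (k : ℕ) (hk : k < n) :
      n.descFactorial k * ((q + 1) * longCyclePermCount q (n - k)) ≤ n ! := by
    obtain ⟨j, hj⟩ : ∃ j, n - k = j + 1 := ⟨n - k - 1, by omega⟩
    calc _ ≤ n.descFactorial k * (n - k)! :=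
          Nat.mul_le_mul_left _ (hj ▸ ih j (by omega))
      _ = n ! := by rw [mul_comm, factorial_mul_descFactorial hk.le]
  calc (q + 1) * longCyclePermCount q (n + 1)
      ≤ ∑ k ∈ Ico q (n + 1), n.descFactorial k * ((q + 1) * longCyclePermCount q (n - k)) :=
        (Nat.mul_le_mul_left _ (longCyclePermCount_succ_le q n)).trans_eq <| by
          rw [mul_sum]
          exact sum_congr rfl fun k _ => mul_left_comm _ _ _
    _ ≤ (n + 1)! := by
      rcases lt_or_ge n q with hnq | hqn
      · simp [Ico_eq_empty_of_le (show n + 1 ≤ q by omega)]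
      rw [sum_Ico_succ_top hqn, descFactorial_self, Nat.sub_self, longCyclePermCount_zero,
        mul_one, factorial_succ]
      calc _ ≤ (n - q) * n ! + n ! * (q + 1) := by
            gcongr
            simpa using sum_le_card_nsmul (Ico q n) _ _ fun k hk => h_term k (mem_Ico.1 hk).2
        _ = (n + 1) * n ! := by
            rw [mul_comm (n !), ← add_mul]
            congr 1
            omega

end Equiv.Perm

theorem card_perm_all_cycles_long_le_general (m q : ℕ) (hm : 1 ≤ m) :
    (Nat.card {σ : Equiv.Perm (Fin m) // ∀ x, q < Function.minimalPeriod σ x} : ℝ) ≤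
      (Nat.factorial m : ℝ) / (q + 1) := by
  obtain ⟨n, rfl⟩ : ∃ n, m = n + 1 := ⟨m - 1, by omega⟩
  rw [le_div_iff₀ (by positivity), mul_comm]
  exact_mod_cast Equiv.Perm.succ_mul_longCyclePermCount_le q n

/-- The number of permutations of `{1, …, m}` all of whose cycles have length strictly
greater than `q` (the cycle length of a point `x` being the minimal period of `x`,
fixed points counting as cycles of length `1`) is at most `m!/(q+1)`. -/
theorem card_perm_all_cycles_long_le (m q : ℕ) (hm : 1 ≤ m) (hq : 1 ≤ q) :
    (Nat.card {σ : Equiv.Perm (Fin m) // ∀ x, q < Function.minimalPeriod σ x} : ℝ) ≤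
      (Nat.factorial m : ℝ) / (q + 1) :=
  card_perm_all_cycles_long_le_general m q hm
end

section
/- Let N ≥ 2, q ≥ 1 and 1 ≤ ℓ ≤ ℓ' be integers with ℓ + ℓ' ≤ N. Let A be the set of permutations σ of {1, …, N} such that σ has no cycle of length at most q, and σ has two distinct cycles of lengths ℓ and ℓ' respectively (if ℓ = ℓ', this means at least two cycles of length ℓ). Then: if ℓ + ℓ' < N, the cardinality of A is at most N!/(q·ℓ·ℓ'); and if ℓ + ℓ' = N, the cardinality of A is at most N!/(ℓ·ℓ'). -/
/-!
Mark a point `x` on the `ℓ`-cycle and a point `y` on the `ℓ'`-cycle of `σ ∈ A`; each `σ` carries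
at least `ℓ ℓ'` such marks. Listing the orbits `x, σ x, …` and `y, σ y, …` gives an embedding
`Fin ℓ ⊕ Fin ℓ' ↪ Fin N` along which `σ` acts as a fixed pair of rotations, and the marked `σ` is
recovered from this embedding together with the restriction of `σ` to the complement of its
image, a permutation of `N - ℓ - ℓ'` points with no cycle of length `≤ q`. Writing `D(m)` for the
number of such permutations of `m` points, this gives
`ℓ ℓ' |A| ≤ N! / (N - ℓ - ℓ')! · D(N - ℓ - ℓ')`, with `D(0) = 1` and `q D(m) ≤ m!` for `m ≥ 1`. The latter follows from the same device with a
single marked point, by strong induction on `m`: summing over the length `L > q` of the marked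
cycle, `m q D(m) ≤ ∑_{q < L < m} m! + q m! ≤ m · m!`.
-/

open Equiv Function Finset
open scoped Nat

universe u

theorem Function.Semiconj.sumElim {α β γ : Type*} {f : β → α} {g : γ → α} {πβ : β → β}
    {πγ : γ → γ} {σ : α → α} (hf : Semiconj f πβ σ) (hg : Semiconj g πγ σ) :
    Semiconj (Sum.elim f g) (Sum.map πβ πγ) σ
  | .inl b => hf b
  | .inr c => hg c

theorem Finset.exists_ne_of_pair_le_map {ι M : Type*} {s : Finset ι} {f : ι → M} {b b' : M}
    (h : {b, b'} ≤ s.val.map f) : ∃ i ∈ s, ∃ j ∈ s, i ≠ j ∧ f i = b ∧ f j = b' := by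
  obtain ⟨i, hi, rfl⟩ := Multiset.mem_map.1 (Multiset.mem_of_le h (Multiset.mem_cons_self b _))
  obtain ⟨t, ht⟩ := Multiset.exists_cons_of_mem hi
  rw [ht, Multiset.map_cons, Multiset.insert_eq_cons, Multiset.cons_le_cons_iff,
    Multiset.singleton_le] at h
  obtain ⟨j, hj, rfl⟩ := Multiset.mem_map.1 h
  have hnd := s.nodup
  rw [ht, Multiset.nodup_cons] at hnd
  refine ⟨i, hi, j, ?_, fun hij => hnd.1 (hij ▸ hj), rfl, rfl⟩
  rw [← mem_val, ht]
  exact Multiset.mem_cons_of_mem hj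

namespace Equiv.Perm

variable {α : Type u} {β : Type*}

section Orbit

def orbitFin (σ : Perm α) (x : α) (L : ℕ) : Fin L → α := fun t => (σ ^ (t : ℕ)) x

variable {σ : Perm α} {x : α} {L : ℕ}

@[simp] theorem orbitFin_apply (t : Fin L) : orbitFin σ x L t = (σ ^ (t : ℕ)) x := rfl

theorem orbitFin_injective (h : L ≤ minimalPeriod σ x) : Injective (orbitFin σ x L) := by
  intro s t hst
  simp only [orbitFin_apply, ← iterate_eq_pow] at hst
  exact Fin.ext <| iterate_injOn_Iio_minimalPeriod (Set.mem_Iio.2 <| s.2.trans_le h)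
    (Set.mem_Iio.2 <| t.2.trans_le h) hst

theorem semiconj_orbitFin (h : IsPeriodicPt σ L x) :
    Semiconj (orbitFin σ x L) (finRotate L) σ := by
  intro t
  have hL : NeZero L := t.neZero
  simp only [orbitFin_apply, finRotate_apply, Fin.val_add, Fin.val_one', Nat.add_mod_mod,
    ← iterate_eq_pow, h.iterate_mod_apply]
  exact iterate_succ_apply' _ _ _

end Orbit

theorem minimalPeriod_subtypePerm {p : α → Prop} (σ : Perm α) (h : ∀ x, p (σ x) ↔ p x)
    (x : Subtype p) : minimalPeriod (σ.subtypePerm h) x = minimalPeriod σ x := by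
  refine minimalPeriod_eq_minimalPeriod_iff.2 fun n => ?_
  simp only [IsPeriodicPt, IsFixedPt, iterate_eq_pow, subtypePerm_pow, Subtype.ext_iff,
    subtypePerm_apply]

theorem apply_mem_range_iff_of_semiconj {e : β → α} {π : Perm β} {σ : Perm α}
    (h : Semiconj e π σ) (x : α) : σ x ∈ Set.range e ↔ x ∈ Set.range e := by
  refine ⟨fun ⟨b, hb⟩ => ⟨π⁻¹ b, σ.injective ?_⟩, fun ⟨b, hb⟩ => ⟨π b, hb ▸ h b⟩⟩
  rw [← h]
  simpa using hb

theorem card_semiconj_le_card_compl [Finite α] (e : β ↪ α) (π : Perm β) (q : ℕ) :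
    Nat.card {σ : Perm α // Semiconj e π σ ∧ ∀ x ∉ Set.range e, q < minimalPeriod σ x} ≤
      Nat.card {τ : Perm {x // x ∉ Set.range e} // ∀ y, q < minimalPeriod τ y} := by
  have hcompl (σ : Perm α) (h : Semiconj e π σ) (x : α) :
      σ x ∉ Set.range e ↔ x ∉ Set.range e :=
    (apply_mem_range_iff_of_semiconj h x).not
  refine Nat.card_le_card_of_injective
    (fun σ => ⟨σ.1.subtypePerm (hcompl σ.1 σ.2.1), fun y => by
      rw [minimalPeriod_subtypePerm]; exact σ.2.2 y y.2⟩) ?_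
  intro σ₁ σ₂ h
  ext x
  by_cases hx : x ∈ Set.range e
  · obtain ⟨b, rfl⟩ := hx
    rw [← σ₁.2.1, ← σ₂.2.1]
  · simpa using congr($(congrArg Subtype.val h) ⟨x, hx⟩)

theorem card_compl_range_embedding [Fintype α] [DecidableEq α] [Fintype β] (e : β ↪ α) :
    Fintype.card {x // x ∉ Set.range e} = Fintype.card α - Fintype.card β := by
  rw [Fintype.card_subtype_compl, Set.card_range_of_injective e.injective]

abbrev ExtensionsWithLongCycles (q : ℕ) (π : Perm β) (α : Type u) : Type _ :=
  Σ e : β ↪ α, {σ : Perm α // Semiconj e π σ ∧ ∀ x ∉ Set.range e, q < minimalPeriod σ x}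

theorem mul_card_extensionsWithLongCycles_le [Fintype α] [Fintype β] (π : Perm β) (q c B : ℕ)
    (hB : ∀ (γ : Type u) [Fintype γ], Fintype.card γ = Fintype.card α - Fintype.card β →
      c * Nat.card {τ : Perm γ // ∀ y, q < minimalPeriod τ y} ≤ B) :
    c * Nat.card (ExtensionsWithLongCycles q π α) ≤
      (Fintype.card α).descFactorial (Fintype.card β) * B := by
  classical
  rw [Nat.card_sigma, Finset.mul_sum]
  calc _ ≤ ∑ _e : β ↪ α, B := sum_le_sum fun e _ =>
        (Nat.mul_le_mul_left c (card_semiconj_le_card_compl e π q)).trans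
          (hB _ (card_compl_range_embedding e))
    _ = _ := by simp [Fintype.card_embedding_eq]

theorem card_pointed_le_card_extensionsWithLongCycles [Finite α] (q : ℕ) {L : ℕ} (hL : 0 < L) :
    Nat.card {p : Perm α × α // (∀ x, q < minimalPeriod p.1 x) ∧ minimalPeriod p.1 p.2 = L} ≤
      Nat.card (ExtensionsWithLongCycles q (finRotate L) α) := by
  refine Nat.card_le_card_of_injective (fun p => ⟨⟨orbitFin p.1.1 p.1.2 L,
      orbitFin_injective p.2.2.ge⟩, p.1.1,
      semiconj_orbitFin (isPeriodicPt_iff_minimalPeriod_dvd.2 (dvd_of_eq p.2.2)),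
      fun x _ => p.2.1 x⟩) ?_
  intro p₁ p₂ h
  have hσ : p₁.1.1 = p₂.1.1 := congrArg (fun z => z.2.1) h
  have hx : p₁.1.2 = p₂.1.2 := by simpa using congrArg (fun z => z.1 ⟨0, hL⟩) h
  exact Subtype.ext (Prod.ext hσ hx)

theorem sum_Ioc_ite_le (q n : ℕ) : ∑ L ∈ Ioc q n, (if L = n then q else 1) ≤ n := by
  calc _ ≤ ∑ L ∈ Ioc q n, (1 + if L = n then q else 0) :=
        sum_le_sum fun L _ => by split_ifs <;> omega
    _ ≤ n := by
        rw [sum_add_distrib, sum_ite_eq']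
        simp only [sum_const, Nat.card_Ioc, smul_eq_mul, mul_one, mem_Ioc]
        split_ifs <;> omega

theorem card_perm_forall_lt_minimalPeriod_le_factorial [Fintype α] (q : ℕ) :
    Nat.card {σ : Perm α // ∀ x, q < minimalPeriod σ x} ≤ (Fintype.card α)! :=
  (Finite.card_subtype_le _).trans_eq (by rw [Nat.card_perm, Nat.card_eq_fintype_card])

theorem card_mul_card_eq_sum_card_minimalPeriod_eq [Fintype α] (q : ℕ) :
    Nat.card {σ : Perm α // ∀ x, q < minimalPeriod σ x} * Fintype.card α =
      ∑ L ∈ Ioc q (Fintype.card α), Nat.card {p : Perm α × α //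
        (∀ x, q < minimalPeriod p.1 x) ∧ minimalPeriod p.1 p.2 = L} := by
  classical
  rw [← Nat.card_eq_fintype_card, ← Nat.card_prod, ← Nat.card_congr
    (prodSubtypeFstEquivSubtypeProd (p := fun σ : Perm α => ∀ x, q < minimalPeriod σ x))]
  simp only [Nat.card_eq_fintype_card, Fintype.card_subtype]
  rw [card_eq_sum_card_fiberwise (f := fun p : Perm α × α => minimalPeriod p.1 p.2)
    (t := Ioc q (Fintype.card α)) fun p hp => mem_Ioc.2 ⟨by simpa using (mem_filter.1 hp).2 p.2,
      minimalPeriod_le_card⟩]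
  simp only [filter_filter]

theorem mul_card_perm_forall_lt_minimalPeriod_le [Fintype α] [Nonempty α] (q : ℕ) :
    q * Nat.card {σ : Perm α // ∀ x, q < minimalPeriod σ x} ≤ (Fintype.card α)! := by
  classical
  induction hn : Fintype.card α using Nat.strong_induction_on generalizing α with
  | _ n ih =>
  have hn0 : 0 < n := hn ▸ Fintype.card_pos
  have hfiber (L : ℕ) (hL : L ∈ Ioc q n) :
      q * Nat.card {p : Perm α × α //
          (∀ x, q < minimalPeriod p.1 x) ∧ minimalPeriod p.1 p.2 = L} ≤
        n ! * if L = n then q else 1 := by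
    obtain ⟨hqL, hLn⟩ := mem_Ioc.1 hL
    have hB (γ : Type u) [Fintype γ] (hγ : Fintype.card γ = n - L) :
        q * Nat.card {τ : Perm γ // ∀ y, q < minimalPeriod τ y} ≤
          (n - L)! * if L = n then q else 1 := by
      split_ifs with h
      · simpa [hγ, h, mul_comm] using
          Nat.mul_le_mul_left q (card_perm_forall_lt_minimalPeriod_le_factorial (α := γ) q)
      · have : Nonempty γ := Fintype.card_pos_iff.1 (by omega)
        simpa using ih (n - L) (by omega) hγ
    calc _ ≤ q * Nat.card (ExtensionsWithLongCycles q (finRotate L) α) :=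
          Nat.mul_le_mul_left q (card_pointed_le_card_extensionsWithLongCycles q (by omega))
      _ ≤ n.descFactorial L * ((n - L)! * if L = n then q else 1) := by
          simpa [hn] using mul_card_extensionsWithLongCycles_le (α := α) (finRotate L) q q _
            fun γ _ hγ => hB γ (by simpa [hn] using hγ)
      _ = _ := by rw [← mul_assoc, mul_comm (n.descFactorial L),
            Nat.factorial_mul_descFactorial hLn]
  have hpoints := card_mul_card_eq_sum_card_minimalPeriod_eq (α := α) q
  rw [hn] at hpoints
  refine Nat.le_of_mul_le_mul_left ?_ hn0
  calc n * (q * Nat.card {σ : Perm α // ∀ x, q < minimalPeriod σ x})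
      = ∑ L ∈ Ioc q n, q * Nat.card {p : Perm α × α //
          (∀ x, q < minimalPeriod p.1 x) ∧ minimalPeriod p.1 p.2 = L} := by
        rw [← mul_sum, ← hpoints]; ring
    _ ≤ ∑ L ∈ Ioc q n, n ! * if L = n then q else 1 := sum_le_sum hfiber
    _ ≤ n * n ! := by
        rw [← mul_sum, mul_comm n]
        exact Nat.mul_le_mul_left _ (sum_Ioc_ite_le q n)

theorem minimalPeriod_eq_card_of_isCycleOn {σ : Perm α} {s : Finset α} {a : α}
    (hσ : σ.IsCycleOn s) (ha : a ∈ s) : minimalPeriod σ a = #s := by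
  have key (n : ℕ) : IsPeriodicPt σ n a ↔ #s ∣ n := by
    rw [IsPeriodicPt, IsFixedPt, iterate_eq_pow, hσ.pow_apply_eq ha]
  exact Nat.dvd_antisymm ((key _).2 dvd_rfl).minimalPeriod_dvd
    ((key _).1 (isPeriodicPt_minimalPeriod σ a))

theorem minimalPeriod_eq_card_support_of_mem_cycleFactorsFinset [Fintype α] [DecidableEq α]
    {σ c : Perm α} {x : α} (hc : c ∈ σ.cycleFactorsFinset) (hx : x ∈ c.support) :
    minimalPeriod σ x = #c.support := by
  rw [cycle_is_cycleOf hx hc]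
  exact minimalPeriod_eq_card_of_isCycleOn (isCycleOn_support_cycleOf σ x)
    (mem_support_cycleOf_iff.2 ⟨.refl _ _, mem_cycleFactorsFinset_support_le hc hx⟩)

theorem pow_apply_ne_pow_apply_of_not_sameCycle {σ : Perm α} {x y : α} (h : ¬σ.SameCycle x y)
    (m n : ℕ) : (σ ^ m) x ≠ (σ ^ n) y := fun hmn =>
  h <| (sameCycle_pow_left (n := m)).1 <| (sameCycle_pow_right (n := n)).1 ⟨0, by simpa using hmn⟩

theorem mul_le_card_of_pair_le_cycleType [Fintype α] [DecidableEq α] {σ : Perm α} {ℓ ℓ' : ℕ}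
    (h : {ℓ, ℓ'} ≤ σ.cycleType) :
    ℓ * ℓ' ≤ Nat.card {p : α × α //
      minimalPeriod σ p.1 = ℓ ∧ minimalPeriod σ p.2 = ℓ' ∧ ¬σ.SameCycle p.1 p.2} := by
  rw [cycleType_def] at h
  obtain ⟨c, hc, c', hc', hne, rfl, rfl⟩ := Finset.exists_ne_of_pair_le_map h
  calc #c.support * #c'.support = Nat.card (c.support ×ˢ c'.support) := by
        rw [Nat.card_eq_fintype_card, Fintype.card_coe, card_product]
    _ ≤ _ := by
      refine Nat.card_le_card_of_injective (fun p => ⟨p.1, ?_⟩) fun p₁ p₂ h => ?_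
      · obtain ⟨hx, hy⟩ := mem_product.1 p.2
        refine ⟨minimalPeriod_eq_card_support_of_mem_cycleFactorsFinset hc hx,
          minimalPeriod_eq_card_support_of_mem_cycleFactorsFinset hc' hy, fun hxy => hne ?_⟩
        exact (cycle_is_cycleOf hx hc).trans (hxy.cycleOf_eq.trans (cycle_is_cycleOf hy hc').symm)
      · exact Subtype.ext (Subtype.mk.inj h)

theorem mul_card_le_card_extensionsWithLongCycles [Fintype α] [DecidableEq α] (q ℓ ℓ' : ℕ) :
    ℓ * ℓ' * Nat.card {σ : Perm α //
        (∀ x, q < minimalPeriod σ x) ∧ ({ℓ, ℓ'} : Multiset ℕ) ≤ σ.cycleType} ≤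
      Nat.card (ExtensionsWithLongCycles q (sumCongr (finRotate ℓ) (finRotate ℓ')) α) := by
  set A := {σ : Perm α // (∀ x, q < minimalPeriod σ x) ∧ ({ℓ, ℓ'} : Multiset ℕ) ≤ σ.cycleType}
  let T (σ : A) := {p : α × α // minimalPeriod σ.1 p.1 = ℓ ∧ minimalPeriod σ.1 p.2 = ℓ' ∧
    ¬σ.1.SameCycle p.1 p.2}
  calc ℓ * ℓ' * Nat.card A = ∑ _σ : A, ℓ * ℓ' := by simp [Nat.card_eq_fintype_card, mul_comm]
    _ ≤ ∑ σ : A, Nat.card (T σ) := sum_le_sum fun σ _ => mul_le_card_of_pair_le_cycleType σ.2.2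
    _ = Nat.card (Σ σ : A, T σ) := Nat.card_sigma.symm
    _ ≤ _ := by
      refine Nat.card_le_card_of_injective (fun ⟨σ, ⟨x, y⟩, hx, hy, hxy⟩ =>
        ⟨⟨Sum.elim (orbitFin σ.1 x ℓ) (orbitFin σ.1 y ℓ'),
          (orbitFin_injective hx.ge).sumElim (orbitFin_injective hy.ge)
            fun s t => pow_apply_ne_pow_apply_of_not_sameCycle hxy s t⟩,
        σ.1, ?_, fun z _ => σ.2.1 z⟩) ?_
      · exact (semiconj_orbitFin (isPeriodicPt_iff_minimalPeriod_dvd.2 (dvd_of_eq hx))).sumElim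
          (semiconj_orbitFin (isPeriodicPt_iff_minimalPeriod_dvd.2 (dvd_of_eq hy)))
      · rintro ⟨σ₁, ⟨x₁, y₁⟩, hx₁, hy₁, _⟩ ⟨σ₂, ⟨x₂, y₂⟩, _, _, _⟩ h
        obtain rfl : σ₁ = σ₂ := Subtype.ext (congrArg (fun z => z.2.1) h)
        have hℓ : 0 < ℓ := hx₁ ▸ (σ₁.2.1 x₁).trans_le' (Nat.zero_le q)
        have hℓ' : 0 < ℓ' := hy₁ ▸ (σ₁.2.1 y₁).trans_le' (Nat.zero_le q)
        obtain rfl : x₁ = x₂ := by simpa using congrArg (fun z => z.1 (.inl ⟨0, hℓ⟩)) h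
        obtain rfl : y₁ = y₂ := by simpa using congrArg (fun z => z.1 (.inr ⟨0, hℓ'⟩)) h
        rfl

theorem mul_card_perm_two_cycles_le [Fintype α] [DecidableEq α] (q ℓ ℓ' : ℕ)
    (h : ℓ + ℓ' < Fintype.card α) :
    q * (ℓ * ℓ' * Nat.card {σ : Perm α //
      (∀ x, q < minimalPeriod σ x) ∧ ({ℓ, ℓ'} : Multiset ℕ) ≤ σ.cycleType}) ≤
        (Fintype.card α)! := by
  have hB (γ : Type u) [Fintype γ] (hγ : Fintype.card γ = Fintype.card α - (ℓ + ℓ')) :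
      q * Nat.card {τ : Perm γ // ∀ y, q < minimalPeriod τ y} ≤ (Fintype.card α - (ℓ + ℓ'))! := by
    have : Nonempty γ := Fintype.card_pos_iff.1 (by omega)
    exact hγ ▸ mul_card_perm_forall_lt_minimalPeriod_le q
  calc _ ≤ q * Nat.card (ExtensionsWithLongCycles q (sumCongr (finRotate ℓ) (finRotate ℓ')) α) :=
        Nat.mul_le_mul_left q (mul_card_le_card_extensionsWithLongCycles q ℓ ℓ')
    _ ≤ (Fintype.card α).descFactorial (ℓ + ℓ') * (Fintype.card α - (ℓ + ℓ'))! := by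
        simpa using
          mul_card_extensionsWithLongCycles_le (sumCongr (finRotate ℓ) (finRotate ℓ')) q q _
          fun γ _ hγ => hB γ (by simpa using hγ)
    _ = _ := by rw [mul_comm, Nat.factorial_mul_descFactorial h.le]

theorem mul_card_perm_two_cycles_le_of_eq [Fintype α] [DecidableEq α] (q ℓ ℓ' : ℕ)
    (h : ℓ + ℓ' = Fintype.card α) :
    ℓ * ℓ' * Nat.card {σ : Perm α //
      (∀ x, q < minimalPeriod σ x) ∧ ({ℓ, ℓ'} : Multiset ℕ) ≤ σ.cycleType} ≤
        (Fintype.card α)! := by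
  have hB (γ : Type u) [Fintype γ] (hγ : Fintype.card γ = 0) :
      1 * Nat.card {τ : Perm γ // ∀ y, q < minimalPeriod τ y} ≤ 1 := by
    simpa [hγ] using card_perm_forall_lt_minimalPeriod_le_factorial (α := γ) q
  calc _ ≤ Nat.card (ExtensionsWithLongCycles q (sumCongr (finRotate ℓ) (finRotate ℓ')) α) :=
        mul_card_le_card_extensionsWithLongCycles q ℓ ℓ'
    _ ≤ (Fintype.card α).descFactorial (ℓ + ℓ') := by
        simpa using
          mul_card_extensionsWithLongCycles_le (sumCongr (finRotate ℓ) (finRotate ℓ')) q 1 1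
          fun γ _ hγ => hB γ (by simpa [← h] using hγ)
    _ = _ := by rw [← h, Nat.descFactorial_self]

end Equiv.Perm

theorem card_perm_two_cycles_no_short_cycle_le_general (N q ℓ ℓ' : ℕ)
    (hq : 1 ≤ q) (hℓ : 1 ≤ ℓ) (hℓℓ' : ℓ ≤ ℓ') :
    (ℓ + ℓ' < N →
      (Nat.card {σ : Equiv.Perm (Fin N) //
          (∀ x, q < Function.minimalPeriod σ x) ∧
            ({ℓ, ℓ'} : Multiset ℕ) ≤ Equiv.Perm.cycleType σ} : ℝ) ≤
        (Nat.factorial N : ℝ) / (q * ℓ * ℓ')) ∧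
    (ℓ + ℓ' = N →
      (Nat.card {σ : Equiv.Perm (Fin N) //
          (∀ x, q < Function.minimalPeriod σ x) ∧
            ({ℓ, ℓ'} : Multiset ℕ) ≤ Equiv.Perm.cycleType σ} : ℝ) ≤
        (Nat.factorial N : ℝ) / (ℓ * ℓ')) := by
  have hℓ' : 1 ≤ ℓ' := hℓ.trans hℓℓ'
  refine ⟨fun hlt => ?_, fun heq => ?_⟩
  · have := Perm.mul_card_perm_two_cycles_le (α := Fin N) q ℓ ℓ' (by simpa using hlt)
    rw [Fintype.card_fin] at this
    rw [le_div_iff₀ (by positivity)]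
    exact_mod_cast (by linarith [this])
  · have := Perm.mul_card_perm_two_cycles_le_of_eq (α := Fin N) q ℓ ℓ' (by simpa using heq)
    rw [Fintype.card_fin] at this
    rw [le_div_iff₀ (by positivity)]
    exact_mod_cast (by linarith [this])

/-- Counting permutations with two prescribed long cycles and no short cycle.
For `N ≥ 2`, `q ≥ 1`, `1 ≤ ℓ ≤ ℓ'` with `ℓ + ℓ' ≤ N`, let `A` be the set of permutations
of `{1,…,N}` with no cycle of length at most `q` (the cycle length of a point being its
minimal period, fixed points counting as cycles of length `1`) having two distinct cycles
of lengths `ℓ` and `ℓ'` (encoded as `{ℓ, ℓ'} ≤ cycleType σ` as multisets; if `ℓ = ℓ'`,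
this means at least two cycles of length `ℓ`). Then `#A ≤ N!/(q·ℓ·ℓ')` if `ℓ + ℓ' < N`,
and `#A ≤ N!/(ℓ·ℓ')` if `ℓ + ℓ' = N`. -/
theorem card_perm_two_cycles_no_short_cycle_le (N q ℓ ℓ' : ℕ)
    (hN : 2 ≤ N) (hq : 1 ≤ q) (hℓ : 1 ≤ ℓ) (hℓℓ' : ℓ ≤ ℓ') (hsum : ℓ + ℓ' ≤ N) :
    (ℓ + ℓ' < N →
      (Nat.card {σ : Equiv.Perm (Fin N) //
          (∀ x, q < Function.minimalPeriod σ x) ∧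
            ({ℓ, ℓ'} : Multiset ℕ) ≤ Equiv.Perm.cycleType σ} : ℝ) ≤
        (Nat.factorial N : ℝ) / (q * ℓ * ℓ')) ∧
    (ℓ + ℓ' = N →
      (Nat.card {σ : Equiv.Perm (Fin N) //
          (∀ x, q < Function.minimalPeriod σ x) ∧
            ({ℓ, ℓ'} : Multiset ℕ) ≤ Equiv.Perm.cycleType σ} : ℝ) ≤
        (Nat.factorial N : ℝ) / (ℓ * ℓ')) :=
  card_perm_two_cycles_no_short_cycle_le_general N q ℓ ℓ' hq hℓ hℓℓ'
end

section
/- There exists a constant C > 0 such that for all integers q ≥ 1 and s ≥ C·q, the number of permutations of {1, …, s} all of whose cycles have length at most q is at most s! · (2q/s)^{s/(3q)}. -/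
/-!
Let `g(n)` count the permutations of an `n`-set all of whose cycles have length at most `q`.
A permutation of `n + 1` points is determined by the cycle through a chosen point (of length
`ℓ + 1 ≤ q`, i.e. an ordered choice of `ℓ` further points) and by what remains after deleting
that cycle, which is such a permutation of the other `n - ℓ` points. Hence
`g(n+1)/(n+1)! ≤ q/(n+1) · max_{ℓ<q} g(n-ℓ)/(n-ℓ)!`: every step down by at most `q` that stays
above `X` gains a factor `q/X`. With `X = s/2` and `s ≥ 6q` there is room for `⌈s/(3q)⌉` steps
below `s`, and `(2q/s)^⌈s/(3q)⌉ ≤ (2q/s)^(s/(3q))` as `2q/s ≤ 1`.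
-/

open Equiv Function Finset
open scoped Nat

namespace Function

variable {α β : Type*}

theorem Semiconj.minimalPeriod_eq_s14 {f : α → α} {g : β → β} {h : α → β} (hsc : Semiconj h f g)
    (hinj : Injective h) (x : α) : minimalPeriod g (h x) = minimalPeriod f x :=
  minimalPeriod_eq_minimalPeriod_iff.2 fun n => by
    simp only [IsPeriodicPt, IsFixedPt, ← (hsc.iterate_right n) x, hinj.eq_iff]

theorem minimalPeriod_eq_of_iterate_eq {f g : α → α} {x : α} (h : ∀ n, f^[n] x = g^[n] x) :
    minimalPeriod f x = minimalPeriod g x :=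
  minimalPeriod_eq_minimalPeriod_iff.2 fun n => by
    simp only [IsPeriodicPt, IsFixedPt, h]

def orbitTailEmbedding (f : α → α) (a : α) {ℓ : ℕ} (h : minimalPeriod f a = ℓ + 1) :
    Fin ℓ ↪ {x // x ≠ a} where
  toFun i := ⟨f^[i + 1] a, fun hi => by
    have := iterate_injOn_Iio_minimalPeriod (f := f) (x := a)
      (show i.1 + 1 ∈ Set.Iio _ by simp [h]) (show 0 ∈ Set.Iio _ by simp [h]) hi
    omega⟩
  inj' i j hij := Fin.ext <| by
    have := iterate_injOn_Iio_minimalPeriod (f := f) (x := a)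
      (show i.1 + 1 ∈ Set.Iio _ by simp [h]) (show j.1 + 1 ∈ Set.Iio _ by simp [h])
      (congrArg Subtype.val hij)
    omega

end Function

namespace Equiv.Perm

variable {α β : Type*}

def CyclesAtMost (q : ℕ) (σ : Perm α) : Prop := ∀ x, minimalPeriod σ x ≤ q

noncomputable def cardCyclesAtMost (q n : ℕ) : ℕ :=
  Nat.card {σ : Perm (Fin n) // CyclesAtMost q σ}

theorem cyclesAtMost_permCongr_iff (e : α ≃ β) {q : ℕ} {σ : Perm α} :
    CyclesAtMost q (e.permCongr σ) ↔ CyclesAtMost q σ := by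
  have key : ∀ x, minimalPeriod (e.permCongr σ) (e x) = minimalPeriod σ x :=
    Semiconj.minimalPeriod_eq_s14 (fun x => by simp) e.injective
  simp only [CyclesAtMost, e.surjective.forall, key]

theorem natCard_cyclesAtMost [Fintype α] (q : ℕ) :
    Nat.card {σ : Perm α // CyclesAtMost q σ} = cardCyclesAtMost q (Fintype.card α) :=
  Nat.card_congr <| (Fintype.equivFin α).permCongr.subtypeEquiv fun _ =>
    (cyclesAtMost_permCongr_iff _).symm

theorem cyclesAtMost_ofSubtype_iff {p : α → Prop} [DecidablePred p] {q : ℕ} (hq : 1 ≤ q)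
    {f : Perm (Subtype p)} : CyclesAtMost q (ofSubtype f) ↔ CyclesAtMost q f := by
  have key : ∀ y : Subtype p, minimalPeriod (ofSubtype f) y = minimalPeriod f y :=
    Semiconj.minimalPeriod_eq_s14 (fun y => (ofSubtype_apply_coe f y).symm) Subtype.val_injective
  refine ⟨fun h y => key y ▸ h y, fun h x => ?_⟩
  by_cases hx : p x
  · exact key ⟨x, hx⟩ ▸ h _
  · rw [minimalPeriod_eq_one_iff_isFixedPt.2 (ofSubtype_apply_of_not_mem f hx)]
    exact hq

theorem natCard_cyclesAtMost_fixing [Fintype α] [DecidableEq α] {q : ℕ} (hq : 1 ≤ q)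
    (S : Finset α) :
    Nat.card {r : Perm α // (∀ x ∈ S, r x = x) ∧ CyclesAtMost q r} =
      cardCyclesAtMost q (Fintype.card α - #S) := by
  rw [← Fintype.card_coe S, ← Fintype.card_subtype_compl, ← natCard_cyclesAtMost]
  refine (Nat.card_congr (((Perm.subtypeEquivSubtypePerm (· ∉ S)).subtypeEquiv
    (q := fun r => CyclesAtMost q r.1) fun f => (cyclesAtMost_ofSubtype_iff hq).symm).trans
    ((Equiv.subtypeSubtypeEquivSubtypeInter _ _).trans
      (Equiv.subtypeEquivRight fun r => by simp)))).symm

theorem sameCycle_iff_exists_iterate_eq [Finite α] {σ : Perm α} {a x : α} :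
    σ.SameCycle a x ↔ ∃ n, σ^[n] a = x := by
  simp only [iterate_eq_pow]
  exact ⟨SameCycle.exists_nat_pow_eq, fun ⟨n, hn⟩ => hn ▸ sameCycle_pow_right.2 (.refl σ a)⟩

section CycleRemoval

variable [Fintype α] [DecidableEq α] {σ : Perm α} {a x : α}

theorem cycleOf_eq_of_iterate_eq {τ : Perm α} (h : ∀ n, σ^[n] a = τ^[n] a) :
    σ.cycleOf a = τ.cycleOf a := by
  have hsame : ∀ x, σ.SameCycle a x ↔ τ.SameCycle a x := fun x => by
    simp only [sameCycle_iff_exists_iterate_eq, h]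
  ext x
  by_cases hx : σ.SameCycle a x
  · obtain ⟨n, rfl⟩ := sameCycle_iff_exists_iterate_eq.1 hx
    rw [hx.cycleOf_apply, ((hsame _).1 hx).cycleOf_apply, ← iterate_succ_apply' σ, h, h,
      iterate_succ_apply']
  · rw [cycleOf_apply_of_not_sameCycle hx, cycleOf_apply_of_not_sameCycle ((hsame x).not.1 hx)]

theorem mul_inv_cycleOf_apply_of_sameCycle (hx : σ.SameCycle a x) :
    (σ * (σ.cycleOf a)⁻¹) x = x := by
  rw [mul_apply, cycleOf_inv, (sameCycle_inv.2 hx).cycleOf_apply, inv_def, apply_symm_apply]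

theorem mul_inv_cycleOf_apply_of_not_sameCycle (hx : ¬σ.SameCycle a x) :
    (σ * (σ.cycleOf a)⁻¹) x = σ x := by
  rw [mul_apply, cycleOf_inv, cycleOf_apply_of_not_sameCycle (sameCycle_inv.not.2 hx)]

theorem iterate_mul_inv_cycleOf_of_not_sameCycle (hx : ¬σ.SameCycle a x) (n : ℕ) :
    (⇑(σ * (σ.cycleOf a)⁻¹))^[n] x = σ^[n] x := by
  induction n with
  | zero => rfl
  | succ n ih =>
    rw [iterate_succ_apply', iterate_succ_apply', ih, mul_inv_cycleOf_apply_of_not_sameCycle]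
    rwa [iterate_eq_pow, sameCycle_pow_right]

theorem CyclesAtMost.mul_inv_cycleOf {q : ℕ} (hσ : CyclesAtMost q σ) (hq : 1 ≤ q) (a : α) :
    CyclesAtMost q (σ * (σ.cycleOf a)⁻¹) := fun x => by
  by_cases hx : σ.SameCycle a x
  · rw [minimalPeriod_eq_one_iff_isFixedPt.2 (mul_inv_cycleOf_apply_of_sameCycle hx)]
    exact hq
  · rw [minimalPeriod_eq_of_iterate_eq (iterate_mul_inv_cycleOf_of_not_sameCycle hx)]
    exact hσ x

end CycleRemoval

section Counting

variable [Fintype α] [DecidableEq α] {q : ℕ}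

theorem natCard_cyclesAtMost_minimalPeriod_eq_le (hq : 1 ≤ q) (a : α) (ℓ : ℕ) :
    Nat.card {σ : Perm α // CyclesAtMost q σ ∧ minimalPeriod σ a = ℓ + 1} ≤
      (Fintype.card α - 1).descFactorial ℓ * cardCyclesAtMost q (Fintype.card α - (ℓ + 1)) := by
  let S (e : Fin ℓ ↪ {x // x ≠ a}) : Finset α :=
    insert a ((univ.map e).map (Embedding.subtype _))
  have hS (e) : #(S e) = ℓ + 1 := by
    rw [card_insert_of_notMem (by simpa using fun i => (e i).2), card_map, card_map, card_univ,
      Fintype.card_fin]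
  let Φ (σ : {σ : Perm α // CyclesAtMost q σ ∧ minimalPeriod σ a = ℓ + 1}) :
      Σ e : Fin ℓ ↪ {x // x ≠ a}, {r : Perm α // (∀ x ∈ S e, r x = x) ∧ CyclesAtMost q r} :=
    ⟨orbitTailEmbedding σ.1 a σ.2.2, σ.1 * (σ.1.cycleOf a)⁻¹, fun x hx => by
      refine mul_inv_cycleOf_apply_of_sameCycle (sameCycle_iff_exists_iterate_eq.2 ?_)
      simp only [S, mem_insert, mem_map, mem_univ, true_and, Embedding.subtype_apply] at hx
      rcases hx with rfl | ⟨_, ⟨i, rfl⟩, rfl⟩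
      exacts [⟨0, rfl⟩, ⟨i + 1, rfl⟩], σ.2.1.mul_inv_cycleOf hq a⟩
  have hΦ : Injective Φ := fun σ τ h => by
    have hr : σ.1 * (σ.1.cycleOf a)⁻¹ = τ.1 * (τ.1.cycleOf a)⁻¹ := congrArg (fun t => t.2.1) h
    have htail (i : Fin ℓ) : σ.1^[i + 1] a = τ.1^[i + 1] a := congrArg (fun t => (t.1 i : α)) h
    have hiter (n : ℕ) : σ.1^[n] a = τ.1^[n] a := by
      rw [← iterate_mod_minimalPeriod_eq, ← iterate_mod_minimalPeriod_eq (f := τ.1), σ.2.2, τ.2.2]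
      have : n % (ℓ + 1) < ℓ + 1 := Nat.mod_lt n ℓ.succ_pos
      rcases hm : n % (ℓ + 1) with _ | m
      · rfl
      · exact htail ⟨m, by omega⟩
    apply Subtype.ext
    simpa [cycleOf_eq_of_iterate_eq hiter] using congrArg (· * τ.1.cycleOf a) hr
  calc _ ≤ Nat.card (Σ e : Fin ℓ ↪ {x // x ≠ a},
        {r : Perm α // (∀ x ∈ S e, r x = x) ∧ CyclesAtMost q r}) :=
        Nat.card_le_card_of_injective Φ hΦ
    _ = _ := by
      simp only [Nat.card_sigma, natCard_cyclesAtMost_fixing hq, hS, sum_const, card_univ,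
        Fintype.card_embedding_eq, Fintype.card_fin, smul_eq_mul]
      rw [show Fintype.card {x // x ≠ a} = Fintype.card α - 1 from Set.card_ne_eq a]

theorem natCard_cyclesAtMost_le_sum (hq : 1 ≤ q) (a : α) :
    Nat.card {σ : Perm α // CyclesAtMost q σ} ≤
      ∑ ℓ ∈ range q,
        (Fintype.card α - 1).descFactorial ℓ * cardCyclesAtMost q (Fintype.card α - (ℓ + 1)) := by
  have hperiod (σ : {σ : Perm α // CyclesAtMost q σ}) :
      minimalPeriod σ.1 a = minimalPeriod σ.1 a - 1 + 1 ∧ minimalPeriod σ.1 a - 1 < q := by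
    have := minimalPeriod_pos_of_mem_periodicPts (σ.1.injective.mem_periodicPts a)
    have := σ.2 a
    omega
  let Φ (σ : {σ : Perm α // CyclesAtMost q σ}) :
      Σ ℓ : Fin q, {σ : Perm α // CyclesAtMost q σ ∧ minimalPeriod σ a = ℓ + 1} :=
    ⟨⟨_, (hperiod σ).2⟩, σ.1, σ.2, (hperiod σ).1⟩
  have hΦ : Injective Φ := fun σ τ h => Subtype.ext (congrArg (fun t => t.2.1) h)
  calc _ ≤ _ := Nat.card_le_card_of_injective Φ hΦ
    _ = ∑ ℓ : Fin q, Nat.card {σ : Perm α // CyclesAtMost q σ ∧ minimalPeriod σ a = ℓ + 1} :=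
        Nat.card_sigma
    _ ≤ _ := by
      rw [← Fin.sum_univ_eq_sum_range]
      exact sum_le_sum fun ℓ _ => natCard_cyclesAtMost_minimalPeriod_eq_le hq a ℓ

theorem cardCyclesAtMost_le_factorial (q n : ℕ) : cardCyclesAtMost q n ≤ n ! :=
  (Finite.card_subtype_le _).trans (by simp [Fintype.card_perm])

theorem cardCyclesAtMost_succ_le {m : ℕ} {B : ℝ} (hq : 1 ≤ q) (hqm : q ≤ m + 1)
    (h : ∀ ℓ < q, (cardCyclesAtMost q (m - ℓ) : ℝ) ≤ (m - ℓ)! * B) :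
    (cardCyclesAtMost q (m + 1) : ℝ) ≤ q * (m ! * B) := by
  have hterm (ℓ : ℕ) (hℓ : ℓ ∈ range q) :
      ((m.descFactorial ℓ * cardCyclesAtMost q (m - ℓ) : ℕ) : ℝ) ≤ m ! * B := by
    have hℓ : ℓ < q := mem_range.1 hℓ
    calc ((m.descFactorial ℓ * cardCyclesAtMost q (m - ℓ) : ℕ) : ℝ)
        ≤ m.descFactorial ℓ * ((m - ℓ)! * B) := by
          push_cast
          exact mul_le_mul_of_nonneg_left (h ℓ hℓ) (by positivity)
      _ = m ! * B := by
          rw [← mul_assoc, ← Nat.cast_mul, mul_comm (m.descFactorial ℓ),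
            Nat.factorial_mul_descFactorial (by omega)]
  have hrec := natCard_cyclesAtMost_le_sum hq (0 : Fin (m + 1))
  simp only [Fintype.card_fin, Nat.add_sub_cancel, Nat.add_sub_add_right] at hrec
  calc (cardCyclesAtMost q (m + 1) : ℝ)
      ≤ ((∑ ℓ ∈ range q, m.descFactorial ℓ * cardCyclesAtMost q (m - ℓ) : ℕ) : ℝ) := by
        exact_mod_cast hrec
    _ ≤ q * (m ! * B) := by
        push_cast
        simpa using sum_le_sum hterm

theorem cardCyclesAtMost_le_factorial_mul_pow (hq : 1 ≤ q) {X : ℝ} (hX : 0 < X) (k : ℕ) :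
    ∀ n : ℕ, X + k * q ≤ n → (cardCyclesAtMost q n : ℝ) ≤ n ! * (q / X) ^ k := by
  induction k with
  | zero => exact fun n _ => by simpa using cardCyclesAtMost_le_factorial q n
  | succ k ih =>
    intro n hn
    push_cast at hn
    have hkq : (0 : ℝ) ≤ k * q := by positivity
    have hq0 : (0 : ℝ) ≤ q := Nat.cast_nonneg q
    obtain ⟨m, rfl⟩ : ∃ m, n = m + 1 :=
      Nat.exists_eq_add_one.2 (by exact_mod_cast (show (0 : ℝ) < n by linarith))
    push_cast at hn
    have hqm : q ≤ m + 1 := by exact_mod_cast (show (q : ℝ) ≤ m + 1 by linarith)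
    have hgain : (q : ℝ) ≤ (m + 1) * (q / X) := by
      rw [← mul_div_assoc, le_div_iff₀ hX]
      exact mul_comm (q : ℝ) X ▸ mul_le_mul_of_nonneg_right (by linarith) hq0
    calc (cardCyclesAtMost q (m + 1) : ℝ) ≤ q * (m ! * (q / X) ^ k) := by
          refine cardCyclesAtMost_succ_le hq hqm fun ℓ hℓ => ih _ ?_
          have : (ℓ : ℝ) + 1 ≤ q := by exact_mod_cast hℓ
          rw [Nat.cast_sub (by omega)]
          linarith
      _ ≤ ((m + 1) * (q / X)) * (m ! * (q / X) ^ k) :=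
          mul_le_mul_of_nonneg_right hgain (by positivity)
      _ = (m + 1 : ℕ) ! * (q / X) ^ (k + 1) := by
          push_cast [Nat.factorial_succ]
          ring

end Counting

end Equiv.Perm

/-- There is a constant `C > 0` such that for all `q ≥ 1` and `s ≥ C·q`, the number of
permutations of `{1,…,s}` all of whose cycles have length at most `q` (the cycle length
of a point being its minimal period, fixed points counting as cycles of length `1`) is
at most `s!·(2q/s)^{s/(3q)}`. -/
theorem card_perm_all_cycles_short_le :
    ∃ C : ℝ, 0 < C ∧ ∀ q s : ℕ, 1 ≤ q → C * q ≤ (s : ℝ) →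
      (Nat.card {σ : Equiv.Perm (Fin s) // ∀ x, Function.minimalPeriod σ x ≤ q} : ℝ) ≤
        (Nat.factorial s : ℝ) * ((2 * q : ℝ) / s) ^ ((s : ℝ) / (3 * q)) := by
  refine ⟨6, by norm_num, fun q s hq hs => ?_⟩
  have hq0 : (0 : ℝ) < q := by exact_mod_cast hq
  have hs0 : (0 : ℝ) < s := by linarith
  set k := ⌈(s : ℝ) / (3 * q)⌉₊
  have hk : (s : ℝ) / 2 + k * q ≤ s := by
    have hk_lt : (k : ℝ) < s / (3 * q) + 1 := Nat.ceil_lt_add_one (by positivity)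
    have : (s : ℝ) / (3 * q) * q = s / 3 := by field_simp
    nlinarith
  have hbound := Perm.cardCyclesAtMost_le_factorial_mul_pow hq (half_pos hs0) k s hk
  rw [div_div_eq_mul_div, mul_comm (q : ℝ)] at hbound
  refine hbound.trans (mul_le_mul_of_nonneg_left ?_ (by positivity))
  rw [← Real.rpow_natCast]
  exact Real.rpow_le_rpow_of_exponent_ge (by positivity) ((div_le_one hs0).2 (by linarith))
    (Nat.le_ceil _)
end

section
/- Let ρ : ℝ → ℝ be continuous on [0,∞), with ρ(x) = 1 for x ∈ [0,1], ρ(x) ≥ 0 for all x ≥ 0, and ρ differentiable on (1,∞) with x·ρ'(x) + ρ(x−1) = 0 for all x > 1 (so ρ is the Dickman function). Then ρ(x)/(1+x) is integrable on [0,∞) and ∫_0^∞ ρ(x)/(1+x) dx = 1; equivalently, ∫_0^1 ρ((1−v)/v)/v dv = 1. -/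
/-!
On `[1, ∞)` the delay equation reads `ρ' (x) = -ρ (x - 1) / x ≤ 0`, so `ρ` decreases there, and
`-ρ (x + 1)` is an antiderivative of `ρ x / (1 + x)` on `(0, ∞)`. Hence
`∫_0^∞ ρ x / (1 + x) dx = ρ 1 - lim ρ = 1` once `ρ → 0`. The decay comes from monotonicity:
`ρ X · log (X / 2) ≤ ∫_2^X ρ (x - 1) / x dx = ρ 2 - ρ X`. The second form of the identity is the
substitution `x = (1 - v) / v`.
-/

open MeasureTheory Filter Set Topology

theorem integral_Ioi_zero_eq_intervalIntegral_one_sub_div {E : Type*} [NormedAddCommGroup E]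
    [NormedSpace ℝ E] (f : ℝ → E) :
    ∫ x in Ioi (0 : ℝ), f x = ∫ v in (0 : ℝ)..1, (v ^ 2)⁻¹ • f ((1 - v) / v) := by
  have hinv_sub : ∀ v : ℝ, v ≠ 0 → (1 - v) / v = v⁻¹ - 1 := fun v hv => by field_simp
  have hderiv : ∀ v ∈ Ioo (0 : ℝ) 1,
      HasDerivWithinAt (fun v => (1 - v) / v) (-(v ^ 2)⁻¹) (Ioo 0 1) v := by
    intro v hv
    refine (((hasDerivAt_inv hv.1.ne').sub_const 1).hasDerivWithinAt).congr
      (fun y hy => hinv_sub y hy.1.ne') (hinv_sub v hv.1.ne')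
  have hinj : InjOn (fun v : ℝ => (1 - v) / v) (Ioo 0 1) := by
    intro a ha b hb hab
    simpa [hinv_sub a ha.1.ne', hinv_sub b hb.1.ne'] using hab
  have himage : (fun v : ℝ => (1 - v) / v) '' Ioo 0 1 = Ioi 0 := by
    ext x
    constructor
    · rintro ⟨v, ⟨hv0, hv1⟩, rfl⟩
      exact div_pos (sub_pos.2 hv1) hv0
    · intro hx
      have hx : 0 < x := hx
      refine ⟨(1 + x)⁻¹, ⟨by positivity, inv_lt_one_of_one_lt₀ (by linarith)⟩, ?_⟩
      show (1 - (1 + x)⁻¹) / (1 + x)⁻¹ = x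
      rw [hinv_sub _ (by positivity), inv_inv, add_sub_cancel_left]
  rw [intervalIntegral.integral_of_le zero_le_one, integral_Ioc_eq_integral_Ioo, ← himage,
    integral_image_eq_integral_abs_deriv_smul measurableSet_Ioo hderiv hinj]
  refine setIntegral_congr_fun measurableSet_Ioo fun v _ => ?_
  rw [abs_neg, abs_of_nonneg (by positivity)]

namespace Dickman

variable {ρ : ℝ → ℝ}

theorem continuousOn_comp_sub_one_div (hcont : ContinuousOn ρ (Ici 0)) :
    ContinuousOn (fun x => ρ (x - 1) / x) (Ici 1) := by
  refine ContinuousOn.div ?_ continuousOn_id fun x (hx : 1 ≤ x) => by positivity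
  exact hcont.comp (continuous_sub_right 1).continuousOn fun x (hx : 1 ≤ x) =>
    sub_nonneg.2 hx

theorem intervalIntegral_comp_sub_one_div_eq_sub (hcont : ContinuousOn ρ (Ici 0))
    (hderiv : ∀ x : ℝ, 1 < x → HasDerivAt ρ (-ρ (x - 1) / x) x) {a b : ℝ} (ha : 1 ≤ a)
    (hab : a ≤ b) : ∫ x in a..b, ρ (x - 1) / x = ρ a - ρ b := by
  have hsub : Icc a b ⊆ Ici 1 := fun x hx => ha.trans hx.1
  have hftc : ∫ x in a..b, -ρ (x - 1) / x = ρ b - ρ a := by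
    refine intervalIntegral.integral_eq_sub_of_hasDeriv_right_of_le hab
      (hcont.mono (hsub.trans (Ici_subset_Ici.2 zero_le_one))) (fun x hx => ?_) ?_
    · exact (hderiv x (ha.trans_lt hx.1)).hasDerivWithinAt
    · simp_rw [neg_div]
      exact (((continuousOn_comp_sub_one_div hcont).mono hsub).intervalIntegrable_of_Icc hab).neg
  simp_rw [neg_div, intervalIntegral.integral_neg] at hftc
  linarith

theorem antitoneOn_Ici_one (hcont : ContinuousOn ρ (Ici 0)) (hnonneg : ∀ x : ℝ, 0 ≤ x → 0 ≤ ρ x)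
    (hderiv : ∀ x : ℝ, 1 < x → HasDerivAt ρ (-ρ (x - 1) / x) x) : AntitoneOn ρ (Ici 1) := by
  refine antitoneOn_of_hasDerivWithinAt_nonpos (f' := fun x => -ρ (x - 1) / x) (convex_Ici 1)
    (hcont.mono (Ici_subset_Ici.2 zero_le_one)) (fun x hx => ?_) fun x hx => ?_
  · rw [interior_Ici] at hx
    exact (hderiv x hx).hasDerivWithinAt
  · rw [interior_Ici, mem_Ioi] at hx
    exact div_nonpos_of_nonpos_of_nonneg (neg_nonpos.2 (hnonneg _ (by linarith))) (by linarith)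

theorem mul_log_div_two_le (hcont : ContinuousOn ρ (Ici 0)) (hnonneg : ∀ x : ℝ, 0 ≤ x → 0 ≤ ρ x)
    (hderiv : ∀ x : ℝ, 1 < x → HasDerivAt ρ (-ρ (x - 1) / x) x) {X : ℝ} (hX : 2 ≤ X) :
    ρ X * Real.log (X / 2) ≤ ρ 2 - ρ X := by
  have hint : ∫ x in (2 : ℝ)..X, ρ X * x⁻¹ = ρ X * Real.log (X / 2) := by
    rw [intervalIntegral.integral_const_mul, integral_inv_of_pos two_pos (by linarith)]
  rw [← hint, ← intervalIntegral_comp_sub_one_div_eq_sub hcont hderiv one_le_two hX]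
  refine intervalIntegral.integral_mono_on hX ?_ ?_ fun x hx => ?_
  · exact (continuousOn_const.mul (continuousOn_inv₀.mono fun x (hx : x ∈ Icc 2 X) =>
      (by linarith [hx.1] : (0 : ℝ) < x).ne')).intervalIntegrable_of_Icc hX
  · exact ((continuousOn_comp_sub_one_div hcont).mono fun x (hx : x ∈ Icc 2 X) =>
      one_le_two.trans hx.1).intervalIntegrable_of_Icc hX
  · have hx0 : 0 < x := by linarith [hx.1]
    rw [← div_eq_mul_inv]
    gcongr
    exact antitoneOn_Ici_one hcont hnonneg hderiv (show 1 ≤ x - 1 by linarith [hx.1])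
      (show 1 ≤ X by linarith) (by linarith [hx.2])

theorem tendsto_atTop_zero (hcont : ContinuousOn ρ (Ici 0)) (hnonneg : ∀ x : ℝ, 0 ≤ x → 0 ≤ ρ x)
    (hderiv : ∀ x : ℝ, 1 < x → HasDerivAt ρ (-ρ (x - 1) / x) x) : Tendsto ρ atTop (𝓝 0) := by
  refine squeeze_zero' ((eventually_ge_atTop 0).mono hnonneg)
    (g := fun X => ρ 2 / (1 + Real.log (X / 2))) ?_ ?_
  · filter_upwards [eventually_ge_atTop 2] with X hX
    have hlog : 0 ≤ Real.log (X / 2) := Real.log_nonneg (by linarith)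
    rw [le_div_iff₀ (by positivity), mul_one_add]
    linarith [mul_log_div_two_le hcont hnonneg hderiv hX]
  · exact tendsto_const_nhds.div_atTop (tendsto_atTop_add_const_left _ 1
      (Real.tendsto_log_atTop.comp (tendsto_id.atTop_div_const two_pos)))

theorem hasDerivAt_neg_comp_add_one (hderiv : ∀ x : ℝ, 1 < x → HasDerivAt ρ (-ρ (x - 1) / x) x)
    {x : ℝ} (hx : 0 < x) : HasDerivAt (fun X => -ρ (X + 1)) (ρ x / (1 + x)) x := by
  have h := ((hderiv (x + 1) (by linarith)).comp_add_const x 1).neg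
  rwa [add_sub_cancel_right, neg_div, neg_neg, add_comm] at h

end Dickman

/-- Integral identity for the Dickman function `ρ` (equal to `1` on `[0,1]`, nonnegative,
continuous on `[0,∞)`, satisfying `x·ρ'(x) + ρ(x-1) = 0` for `x > 1`):
`x ↦ ρ(x)/(1+x)` is integrable on `[0,∞)` with `∫_0^∞ ρ(x)/(1+x) dx = 1`;
equivalently `∫_0^1 ρ((1-v)/v)/v dv = 1`. -/
theorem dickman_integral_eq_one (ρ : ℝ → ℝ)
    (hcont : ContinuousOn ρ (Set.Ici 0))
    (hone : ∀ x ∈ Set.Icc (0 : ℝ) 1, ρ x = 1)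
    (hnonneg : ∀ x : ℝ, 0 ≤ x → 0 ≤ ρ x)
    (hderiv : ∀ x : ℝ, 1 < x → HasDerivAt ρ (-ρ (x - 1) / x) x) :
    IntegrableOn (fun x => ρ x / (1 + x)) (Set.Ici 0) ∧
      ∫ x in Set.Ici (0 : ℝ), ρ x / (1 + x) = 1 ∧
      ∫ v in (0 : ℝ)..1, ρ ((1 - v) / v) / v = 1 := by
  have hprim : ∀ x ∈ Ioi (0 : ℝ), HasDerivAt (fun X => -ρ (X + 1)) (ρ x / (1 + x)) x :=
    fun x hx => Dickman.hasDerivAt_neg_comp_add_one hderiv hx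
  have hprim0 : ContinuousWithinAt (fun X => -ρ (X + 1)) (Ici 0) 0 :=
    ((hcont.comp (continuous_add_const 1).continuousOn fun x (hx : 0 ≤ x) =>
      show 0 ≤ x + 1 by linarith).neg).continuousWithinAt self_mem_Ici
  have hpos : ∀ x ∈ Ioi (0 : ℝ), 0 ≤ ρ x / (1 + x) := fun x (hx : 0 < x) =>
    div_nonneg (hnonneg x hx.le) (by linarith)
  have hlim : Tendsto (fun X => -ρ (X + 1)) atTop (𝓝 (-0)) :=
    ((Dickman.tendsto_atTop_zero hcont hnonneg hderiv).comp
      (tendsto_atTop_add_const_right _ 1 tendsto_id)).neg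
  have hIoi : ∫ x in Ioi (0 : ℝ), ρ x / (1 + x) = 1 := by
    rw [integral_Ioi_of_hasDerivAt_of_nonneg hprim0 hprim hpos hlim, zero_add,
      hone 1 ⟨zero_le_one, le_rfl⟩]
    norm_num
  -- at `v = 0` both integrands vanish, through `x / 0 = 0` and `0⁻¹ = 0`
  have hintegrand : (fun v : ℝ => ρ ((1 - v) / v) / v) =
      fun v => (v ^ 2)⁻¹ • (ρ ((1 - v) / v) / (1 + (1 - v) / v)) := by
    funext v
    rcases eq_or_ne v 0 with rfl | hv
    · simp
    · rw [smul_eq_mul]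
      field_simp
      rw [add_sub_cancel, mul_one]
  refine ⟨(integrableOn_Ici_iff_integrableOn_Ioi).2
      (integrableOn_Ioi_deriv_of_nonneg hprim0 hprim hpos hlim),
    by rwa [integral_Ici_eq_integral_Ioi], ?_⟩
  rwa [hintegrand, ← integral_Ioi_zero_eq_intervalIntegral_one_sub_div (fun x => ρ x / (1 + x))]
end
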